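/- arXiv:2208.03989 — 6 statements merged into one kernel-verified Lean document; each statement's English description precedes it below -/
import Mathlib

section
/- Every integer grid bridge from i to j with B upward jumps satisfies l < ω k < u for all k ≤ K if and only if u − B > i and i > l + D. Equivalently, all candidate bridges avoid the taboo bounds l and u exactly when i + B < u and i − D > l. -/
/-- An integer grid bridge from `i` to `j` with `B` upward jumps and `D` downward
jumps. -/
def IsBridge (i j : ℤ) (B D : ℕ) (ω : Fin (B + D + 1) → ℤ) : Prop :=
  ω 0 = i ∧ ω (Fin.last (B + D)) = j ∧
    (∀ k : Fin (B + D), |ω k.succ - ω k.castSucc| = 1) ∧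
    (Finset.univ.filter (fun k : Fin (B + D) => ω k.succ = ω k.castSucc + 1)).card = B

lemma sum_ite_range (m : ℕ) : ∀ n : ℕ, m ≤ n →
    ∑ k ∈ Finset.range n, (if k < m then (1 : ℕ) else 0) = m := by
  intro n
  induction n with
  | zero => intro h; simp; omega
  | succ n ih =>
    intro h
    rcases Nat.lt_or_ge n m with hc | hc
    · have hm : m = n + 1 := by omega
      subst hm
      rw [Finset.sum_congr rfl (fun k hk => if_pos (Finset.mem_range.mp hk))]
      simp
    · rw [Finset.sum_range_succ, ih (by omega)]
      simp [Nat.not_lt.mpr hc]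

lemma card_filter_lt (n m : ℕ) (h : m ≤ n) :
    ((Finset.univ : Finset (Fin n)).filter (fun k => k.val < m)).card = m := by
  rw [Finset.card_filter]
  rw [Fin.sum_univ_eq_sum_range (fun k => if k < m then (1 : ℕ) else 0) n]
  exact sum_ite_range m n h

/-- Every integer grid bridge from `i` to `j` with `B` upward jumps satisfies
`l < ω k < u` for all `k ≤ K` if and only if `u - B > i` and `i > l + D`. -/
theorem all_bridges_avoid_bounds_iff (i j l u : ℤ) (B D : ℕ) (hj : j = i + B - D)
    (hlu : l < u) :
    (∀ ω : Fin (B + D + 1) → ℤ, IsBridge i j B D ω →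
        ∀ k : Fin (B + D + 1), l < ω k ∧ ω k < u) ↔
      (i < u - B ∧ l + D < i) := by
  constructor
  · intro h
    constructor
    · -- use the bridge going up first
      set ω1 : Fin (B + D + 1) → ℤ := fun k =>
        if (k : ℕ) ≤ B then i + k else i + 2 * B - k with hω1
      have hb : IsBridge i j B D ω1 := by
        refine ⟨by simp [hω1], ?_, ?_, ?_⟩
        · simp only [hω1, Fin.val_last]
          split_ifs with hc <;> push_cast <;> omega
        · intro k
          have hk := k.isLt
          simp only [hω1, Fin.val_succ, Fin.coe_castSucc]
          split_ifs with h1 h2 h2 <;> push_cast <;>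
            first
              | omega
              | (rw [abs_eq (by norm_num : (0:ℤ) ≤ 1)]; omega)
        · have he : (Finset.univ.filter (fun k : Fin (B + D) =>
              ω1 k.succ = ω1 k.castSucc + 1)) =
              (Finset.univ.filter (fun k : Fin (B + D) => k.val < B)) := by
            apply Finset.filter_congr
            intro k _
            have hk := k.isLt
            simp only [hω1, Fin.val_succ, Fin.coe_castSucc]
            split_ifs with h1 h2 h2 <;> push_cast <;>
              constructor <;> intro hh <;> omega
          rw [he, card_filter_lt _ _ (by omega)]
      have := (h ω1 hb ⟨B, by omega⟩).2
      simp only [hω1] at this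
      rw [if_pos (le_refl B)] at this
      push_cast at this ⊢
      omega
    · -- use the bridge going down first
      set ω2 : Fin (B + D + 1) → ℤ := fun k =>
        if (k : ℕ) ≤ D then i - k else i - 2 * D + k with hω2
      have hb : IsBridge i j B D ω2 := by
        refine ⟨by simp [hω2], ?_, ?_, ?_⟩
        · simp only [hω2, Fin.val_last]
          split_ifs with hc <;> push_cast <;> omega
        · intro k
          have hk := k.isLt
          simp only [hω2, Fin.val_succ, Fin.coe_castSucc]
          split_ifs with h1 h2 h2 <;> push_cast <;>
            first
              | omega
              | (rw [abs_eq (by norm_num : (0:ℤ) ≤ 1)]; omega)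
        · have he : (Finset.univ.filter (fun k : Fin (B + D) =>
              ω2 k.succ = ω2 k.castSucc + 1)) =
              (Finset.univ.filter (fun k : Fin (B + D) => ¬ k.val < D)) := by
            apply Finset.filter_congr
            intro k _
            have hk := k.isLt
            simp only [hω2, Fin.val_succ, Fin.coe_castSucc]
            split_ifs with h1 h2 h2 <;> push_cast <;>
              constructor <;> intro hh <;> omega
          rw [he]
          have h2 : ((Finset.univ : Finset (Fin (B + D))).filter
              (fun k => k.val < D)).card = D := card_filter_lt _ _ (by omega)
          have h3 := Finset.card_filter_add_card_filter_not
            (s := (Finset.univ : Finset (Fin (B + D))))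
            (p := fun k : Fin (B + D) => k.val < D)
          simp only [Finset.card_univ, Fintype.card_fin] at h3
          omega
      have := (h ω2 hb ⟨D, by omega⟩).1
      simp only [hω2] at this
      rw [if_pos (le_refl D)] at this
      push_cast at this ⊢
      omega
  · rintro ⟨hu, hl⟩ ω ⟨h0, hK, hstep, hcard⟩ k
    set d : Fin (B + D) → ℤ := fun k => ω k.succ - ω k.castSucc with hd
    have hd1 : ∀ k, d k = 1 ∨ d k = -1 := by
      intro k
      have := hstep k
      rcases (abs_eq (by norm_num : (0:ℤ) ≤ 1)).mp this with h | h
      · exact Or.inl h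
      · exact Or.inr h
    have hsum : ∀ s : Finset (Fin (B + D)),
        -(D : ℤ) ≤ ∑ k ∈ s, d k ∧ ∑ k ∈ s, d k ≤ B := by
      intro s
      have hsplit : ∑ k ∈ s, d k =
          ((s.filter (fun k => ω k.succ = ω k.castSucc + 1)).card : ℤ) - ((s.filter (fun k => ¬ ω k.succ = ω k.castSucc + 1)).card : ℤ) := by
        rw [← Finset.sum_filter_add_sum_filter_not s (fun k => ω k.succ = ω k.castSucc + 1)]
        have e1 : ∑ k ∈ s.filter (fun k => ω k.succ = ω k.castSucc + 1), d k = ((s.filter (fun k => ω k.succ = ω k.castSucc + 1)).card : ℤ) := by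
          rw [Finset.sum_congr rfl (fun k hk => ?_), Finset.sum_const,
            nsmul_eq_mul, mul_one]
          have hpk := (Finset.mem_filter.mp hk).2
          simp only [hd]
          omega
        have e2 : ∑ k ∈ s.filter (fun k => ¬ ω k.succ = ω k.castSucc + 1), d k =
            -((s.filter (fun k => ¬ ω k.succ = ω k.castSucc + 1)).card : ℤ) := by
          rw [Finset.sum_congr rfl (fun k hk => ?_), Finset.sum_const,
            nsmul_eq_mul, mul_neg_one]
          have hpk := (Finset.mem_filter.mp hk).2
          rcases hd1 k with h | h
          · exfalso; apply hpk; simp only [hd] at h; omega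
          · exact h
        rw [e1, e2]; ring
      have hb1 : (s.filter (fun k => ω k.succ = ω k.castSucc + 1)).card ≤ B := by
        have := Finset.card_le_card (Finset.filter_subset_filter
          (fun k : Fin (B + D) => ω k.succ = ω k.castSucc + 1) (Finset.subset_univ s))
        omega
      have hb2 : (s.filter (fun k => ¬ ω k.succ = ω k.castSucc + 1)).card ≤ D := by
        have hsub : (s.filter (fun k => ¬ ω k.succ = ω k.castSucc + 1)).card ≤
            (Finset.univ.filter (fun k : Fin (B + D) => ¬ ω k.succ = ω k.castSucc + 1)).card :=
          Finset.card_le_card (Finset.filter_subset_filter _ (Finset.subset_univ s))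
        have h3 := Finset.card_filter_add_card_filter_not
          (s := (Finset.univ : Finset (Fin (B + D))))
          (p := fun k : Fin (B + D) => ω k.succ = ω k.castSucc + 1)
        simp only [Finset.card_univ, Fintype.card_fin] at h3
        omega
      omega
    have tele : ∀ n : ℕ, ∀ hn : n < B + D + 1, ω ⟨n, hn⟩ =
        i + ∑ k ∈ Finset.univ.filter (fun k : Fin (B + D) => k.val < n), d k := by
      intro n
      induction n with
      | zero =>
        intro hn
        have : (Finset.univ.filter (fun k : Fin (B + D) => k.val < 0)) = ∅ := by
          apply Finset.filter_false_of_mem; intro k _; omega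
        rw [this, Finset.sum_empty]
        simpa using h0
      | succ n ih =>
        intro hn
        have hnK : n < B + D := by omega
        have hins : (Finset.univ.filter (fun k : Fin (B + D) => k.val < n + 1)) =
            insert ⟨n, hnK⟩ (Finset.univ.filter (fun k : Fin (B + D) => k.val < n)) := by
          ext k
          simp only [Finset.mem_filter, Finset.mem_insert, Finset.mem_univ, true_and]
          constructor
          · intro hk
            rcases Nat.lt_or_ge k.val n with hc | hc
            · exact Or.inr hc
            · left; apply Fin.ext; simp; omega
          · rintro (rfl | hk)
            · simp
            · omega
        rw [hins, Finset.sum_insert (by simp)]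
        have hstep' : ω ⟨n + 1, hn⟩ = ω ⟨n, by omega⟩ + d ⟨n, hnK⟩ := by
          have : d ⟨n, hnK⟩ = ω (⟨n, hnK⟩ : Fin (B + D)).succ -
              ω (⟨n, hnK⟩ : Fin (B + D)).castSucc := rfl
          rw [this]
          have e1 : (⟨n, hnK⟩ : Fin (B + D)).succ = ⟨n + 1, hn⟩ := rfl
          have e2 : (⟨n, hnK⟩ : Fin (B + D)).castSucc = ⟨n, by omega⟩ := rfl
          rw [e1, e2]; ring
        rw [hstep', ih (by omega)]; ring
    have hk := k.isLt
    have := tele k.val hk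
    have hkk : (⟨k.val, hk⟩ : Fin (B + D + 1)) = k := rfl
    rw [hkk] at this
    have hbnd := hsum (Finset.univ.filter (fun kk : Fin (B + D) => kk.val < k.val))
    constructor <;> omega
end

section
/- For any integer v, there exists an integer grid bridge ω from i to j with B upward jumps attaining the value v (i.e., ω k = v for some k ≤ K) if and only if i − D ≤ v ≤ i + B. -/
lemma card_filter_val_lt (n m : ℕ) (h : m ≤ n) :
    (Finset.univ.filter (fun k : Fin n => (k : ℕ) < m)).card = m := by
  have h1 : (Finset.univ.filter (fun k : Fin n => (k : ℕ) < m)).card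
      = ((Finset.Iio n).filter (fun x => x < m)).card := by
    rw [← Fin.map_valEmbedding_univ, Finset.filter_map, Finset.card_map]
    rfl
  rw [h1]
  have : (Finset.Iio n).filter (fun x => x < m) = Finset.Iio m := by
    ext x; simp; omega
  rw [this, Nat.card_Iio]

lemma card_filter_le_val (n m : ℕ) (h : m ≤ n) :
    (Finset.univ.filter (fun k : Fin n => m ≤ (k : ℕ))).card = n - m := by
  have h1 : (Finset.univ.filter (fun k : Fin n => m ≤ (k : ℕ))).card
      = ((Finset.Iio n).filter (fun x => m ≤ x)).card := by
    rw [← Fin.map_valEmbedding_univ, Finset.filter_map, Finset.card_map]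
    rfl
  rw [h1]
  have : (Finset.Iio n).filter (fun x => m ≤ x) = Finset.Ico m n := by
    ext x; simp; omega
  rw [this, Nat.card_Ico]

/-- There exists an integer grid bridge from `i` to `j` with `B` upward jumps
attaining the value `v` if and only if `i - D ≤ v ≤ i + B`. -/
theorem exists_bridge_attaining_iff (i j v : ℤ) (B D : ℕ) (hj : j = i + B - D) :
    (∃ ω : Fin (B + D + 1) → ℤ, IsBridge i j B D ω ∧ ∃ k : Fin (B + D + 1), ω k = v) ↔
      (i - D ≤ v ∧ v ≤ i + B) := by
  constructor
  · rintro ⟨ω, ⟨h0, hK, hstep, hcard⟩, k, hk⟩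
    set U : Finset (Fin (B + D)) :=
      Finset.univ.filter (fun m : Fin (B + D) => ω m.succ = ω m.castSucc + 1) with hU
    set Dn : Finset (Fin (B + D)) :=
      Finset.univ.filter (fun m : Fin (B + D) => ¬ (ω m.succ = ω m.castSucc + 1)) with hDn
    have hDcard : Dn.card = D := by
      have := Finset.card_filter_add_card_filter_not
        (s := (Finset.univ : Finset (Fin (B + D))))
        (p := fun m : Fin (B + D) => ω m.succ = ω m.castSucc + 1)
      rw [Finset.card_univ, Fintype.card_fin] at this
      rw [← hU, ← hDn] at this
      omega
    have key : ∀ n : ℕ, ∀ hn : n ≤ B + D,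
        i - ((Dn.filter (fun m : Fin (B + D) => (m : ℕ) < n)).card : ℤ) ≤ ω ⟨n, Nat.lt_succ_of_le hn⟩ ∧
        ω ⟨n, Nat.lt_succ_of_le hn⟩ ≤ i + ((U.filter (fun m : Fin (B + D) => (m : ℕ) < n)).card : ℤ) := by
      intro n
      induction n with
      | zero =>
        intro hn
        have : (⟨0, Nat.lt_succ_of_le hn⟩ : Fin (B + D + 1)) = 0 := rfl
        rw [this, h0]
        simp
      | succ n ih =>
        intro hn
        have hn' : n ≤ B + D := by omega
        obtain ⟨ih1, ih2⟩ := ih hn'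
        set m : Fin (B + D) := ⟨n, by omega⟩ with hm
        have hsucc : (m.succ : Fin (B + D + 1)) = ⟨n + 1, Nat.lt_succ_of_le hn⟩ := rfl
        have hcast : (m.castSucc : Fin (B + D + 1)) = ⟨n, Nat.lt_succ_of_le hn'⟩ := rfl
        have hs := hstep m
        rw [hsucc, hcast] at hs
        have hmono1 : (Dn.filter (fun m : Fin (B + D) => (m : ℕ) < n)).card
            ≤ (Dn.filter (fun m : Fin (B + D) => (m : ℕ) < n + 1)).card := by
          apply Finset.card_le_card
          intro x hx
          simp only [Finset.mem_filter] at hx ⊢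
          exact ⟨hx.1, by omega⟩
        have hmono2 : (U.filter (fun m : Fin (B + D) => (m : ℕ) < n)).card
            ≤ (U.filter (fun m : Fin (B + D) => (m : ℕ) < n + 1)).card := by
          apply Finset.card_le_card
          intro x hx
          simp only [Finset.mem_filter] at hx ⊢
          exact ⟨hx.1, by omega⟩
        rcases abs_eq (by norm_num : (0:ℤ) ≤ 1) |>.mp hs with hup | hdown
        · -- up step
          have hmem : m ∈ U := by
            rw [hU, Finset.mem_filter]
            refine ⟨Finset.mem_univ _, ?_⟩
            rw [hsucc, hcast]; linarith
          have hins : U.filter (fun m : Fin (B + D) => (m : ℕ) < n + 1)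
              = insert m (U.filter (fun m : Fin (B + D) => (m : ℕ) < n)) := by
            ext x
            simp only [Finset.mem_filter, Finset.mem_insert]
            constructor
            · rintro ⟨hx1, hx2⟩
              by_cases hxm : x = m
              · exact Or.inl hxm
              · right
                refine ⟨hx1, ?_⟩
                have : (x : ℕ) ≠ n := fun h => hxm (Fin.ext h)
                omega
            · rintro (rfl | ⟨hx1, hx2⟩)
              · exact ⟨hmem, by simp [hm]⟩
              · exact ⟨hx1, by omega⟩
          have hnotmem : m ∉ U.filter (fun m : Fin (B + D) => (m : ℕ) < n) := by
            simp [hm]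
          have hcard' : (U.filter (fun m : Fin (B + D) => (m : ℕ) < n + 1)).card
              = (U.filter (fun m : Fin (B + D) => (m : ℕ) < n)).card + 1 := by
            rw [hins, Finset.card_insert_of_notMem hnotmem]
          constructor
          · have := ih1
            push_cast
            omega
          · push_cast [hcard']
            omega
        · -- down step
          have hmem : m ∈ Dn := by
            rw [hDn, Finset.mem_filter]
            refine ⟨Finset.mem_univ _, ?_⟩
            rw [hsucc, hcast]
            intro h; linarith
          have hins : Dn.filter (fun m : Fin (B + D) => (m : ℕ) < n + 1)
              = insert m (Dn.filter (fun m : Fin (B + D) => (m : ℕ) < n)) := by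
            ext x
            simp only [Finset.mem_filter, Finset.mem_insert]
            constructor
            · rintro ⟨hx1, hx2⟩
              by_cases hxm : x = m
              · exact Or.inl hxm
              · right
                refine ⟨hx1, ?_⟩
                have : (x : ℕ) ≠ n := fun h => hxm (Fin.ext h)
                omega
            · rintro (rfl | ⟨hx1, hx2⟩)
              · exact ⟨hmem, by simp [hm]⟩
              · exact ⟨hx1, by omega⟩
          have hnotmem : m ∉ Dn.filter (fun m : Fin (B + D) => (m : ℕ) < n) := by
            simp [hm]
          have hcard' : (Dn.filter (fun m : Fin (B + D) => (m : ℕ) < n + 1)).card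
              = (Dn.filter (fun m : Fin (B + D) => (m : ℕ) < n)).card + 1 := by
            rw [hins, Finset.card_insert_of_notMem hnotmem]
          constructor
          · push_cast [hcard']
            omega
          · push_cast
            omega
    have hkle : (k : ℕ) ≤ B + D := by omega
    have hkeq : k = ⟨(k : ℕ), Nat.lt_succ_of_le hkle⟩ := by
      apply Fin.ext; rfl
    obtain ⟨hb1, hb2⟩ := key (k : ℕ) hkle
    rw [← hkeq, hk] at hb1 hb2
    have hU1 : (U.filter (fun m : Fin (B + D) => (m : ℕ) < (k : ℕ))).card ≤ B := by
      have := Finset.card_le_card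
        (Finset.filter_subset (fun m : Fin (B + D) => (m : ℕ) < (k : ℕ)) U)
      omega
    have hD1 : (Dn.filter (fun m : Fin (B + D) => (m : ℕ) < (k : ℕ))).card ≤ D := by
      have := Finset.card_le_card
        (Finset.filter_subset (fun m : Fin (B + D) => (m : ℕ) < (k : ℕ)) Dn)
      omega
    constructor
    · have : ((Dn.filter (fun m : Fin (B + D) => (m : ℕ) < (k : ℕ))).card : ℤ) ≤ D := by exact_mod_cast hD1
      linarith
    · have : ((U.filter (fun m : Fin (B + D) => (m : ℕ) < (k : ℕ))).card : ℤ) ≤ B := by exact_mod_cast hU1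
      linarith
  · rintro ⟨h1, h2⟩
    rcases le_or_gt v i with hvi | hvi
    · -- down-first path
      refine ⟨fun k => if (k : ℕ) ≤ D then i - k else i - 2 * D + k, ⟨?_, ?_, ?_, ?_⟩, ?_⟩
      · simp
      · simp only [Fin.val_last]
        split_ifs with h
        · push_cast; omega
        · push_cast; omega
      · intro k
        have hks : (k.succ : Fin (B + D + 1)).val = (k : ℕ) + 1 := rfl
        have hkc : (k.castSucc : Fin (B + D + 1)).val = (k : ℕ) := rfl
        simp only [hks, hkc]
        split_ifs with ha hb hb
        · push_cast; rw [abs_eq (by norm_num : (0:ℤ) ≤ 1)]; right; ring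
        · omega
        · push_cast; rw [abs_eq (by norm_num : (0:ℤ) ≤ 1)]; left
          have : (k : ℕ) = D := by omega
          rw [this]; push_cast; ring
        · push_cast; rw [abs_eq (by norm_num : (0:ℤ) ≤ 1)]; left; ring
      · have heq : (Finset.univ.filter (fun k : Fin (B + D) =>
            (if ((k.succ : Fin (B + D + 1)) : ℕ) ≤ D then i - ((k.succ : Fin (B + D + 1)) : ℕ)
              else i - 2 * D + ((k.succ : Fin (B + D + 1)) : ℕ))
            = (if ((k.castSucc : Fin (B + D + 1)) : ℕ) ≤ D then
                i - ((k.castSucc : Fin (B + D + 1)) : ℕ)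
              else i - 2 * D + ((k.castSucc : Fin (B + D + 1)) : ℕ)) + 1))
            = Finset.univ.filter (fun k : Fin (B + D) => D ≤ (k : ℕ)) := by
          apply Finset.filter_congr
          intro k _
          have hks : ((k.succ : Fin (B + D + 1)) : ℕ) = (k : ℕ) + 1 := rfl
          have hkc : ((k.castSucc : Fin (B + D + 1)) : ℕ) = (k : ℕ) := rfl
          simp only [hks, hkc]
          split_ifs with ha hb hb
          · constructor
            · intro h; push_cast at h; omega
            · intro h; omega
          · omega
          · constructor
            · intro _; omega
            · intro _
              have : (k : ℕ) = D := by omega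
              rw [this]; push_cast; ring
          · constructor
            · intro _; omega
            · intro _; push_cast; ring
        rw [heq, card_filter_le_val _ _ (by omega)]
        omega
      · have ht : (i - v).toNat ≤ D := by omega
        refine ⟨⟨(i - v).toNat, by omega⟩, ?_⟩
        simp only [ht, if_pos]
        have : ((i - v).toNat : ℤ) = i - v := Int.toNat_of_nonneg (by omega)
        rw [this]; ring
    · -- up-first path
      refine ⟨fun k => if (k : ℕ) ≤ B then i + k else i + 2 * B - k, ⟨?_, ?_, ?_, ?_⟩, ?_⟩
      · simp
      · simp only [Fin.val_last]
        split_ifs with h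
        · push_cast; omega
        · push_cast; omega
      · intro k
        have hks : (k.succ : Fin (B + D + 1)).val = (k : ℕ) + 1 := rfl
        have hkc : (k.castSucc : Fin (B + D + 1)).val = (k : ℕ) := rfl
        simp only [hks, hkc]
        split_ifs with ha hb hb
        · push_cast; rw [abs_eq (by norm_num : (0:ℤ) ≤ 1)]; left; ring
        · omega
        · push_cast; rw [abs_eq (by norm_num : (0:ℤ) ≤ 1)]; right
          have : (k : ℕ) = B := by omega
          rw [this]; push_cast; ring
        · push_cast; rw [abs_eq (by norm_num : (0:ℤ) ≤ 1)]; right; ring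
      · have heq : (Finset.univ.filter (fun k : Fin (B + D) =>
            (if ((k.succ : Fin (B + D + 1)) : ℕ) ≤ B then i + ((k.succ : Fin (B + D + 1)) : ℕ)
              else i + 2 * B - ((k.succ : Fin (B + D + 1)) : ℕ))
            = (if ((k.castSucc : Fin (B + D + 1)) : ℕ) ≤ B then
                i + ((k.castSucc : Fin (B + D + 1)) : ℕ)
              else i + 2 * B - ((k.castSucc : Fin (B + D + 1)) : ℕ)) + 1))
            = Finset.univ.filter (fun k : Fin (B + D) => (k : ℕ) < B) := by
          apply Finset.filter_congr
          intro k _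
          have hks : ((k.succ : Fin (B + D + 1)) : ℕ) = (k : ℕ) + 1 := rfl
          have hkc : ((k.castSucc : Fin (B + D + 1)) : ℕ) = (k : ℕ) := rfl
          simp only [hks, hkc]
          split_ifs with ha hb hb
          · constructor
            · intro _; omega
            · intro _; push_cast; ring
          · omega
          · constructor
            · intro h; push_cast at h; omega
            · intro h; omega
          · constructor
            · intro h; push_cast at h; omega
            · intro h; omega
        rw [heq, card_filter_val_lt _ _ (by omega)]
      · have ht : (v - i).toNat ≤ B := by omega
        refine ⟨⟨(v - i).toNat, by omega⟩, ?_⟩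
        simp only [ht, if_pos]
        have : ((v - i).toNat : ℤ) = v - i := Int.toNat_of_nonneg (by omega)
        rw [this]; ring
end

section
/- (Reflection principle, upper bound.) Suppose i < u and j < u. Then the number of integer grid bridges from i to j with B upward jumps that attain the value u at some index (i.e., ω k = u for some k ≤ K) equals C(K, B_u), where B_u = B − j + u. In particular, the set of bridges touching u is equinumerous with the set of unrestricted K-step ±1 paths from i ending at the reflected endpoint 2u − j. -/
open Finset Function

theorem Fin.sum_succ_sub_castSucc {M : Type*} [AddCommGroup M] :
    ∀ {n : ℕ} (f : Fin (n + 1) → M),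
      ∑ k : Fin n, (f k.succ - f k.castSucc) = f (Fin.last n) - f 0
  | 0, f => by simp
  | n + 1, f => by
    rw [Fin.sum_univ_castSucc]
    simp only [Fin.succ_castSucc]
    rw [Fin.sum_succ_sub_castSucc (fun k => f k.castSucc)]
    simp only [Fin.succ_last, Fin.castSucc_zero]
    abel

theorem Fin.sum_ite_mem_one_neg_one {n : ℕ} (S : Finset (Fin n)) :
    ∑ k : Fin n, (if k ∈ S then (1 : ℤ) else -1) = 2 * #S - n := by
  have hsplit := card_filter_add_card_filter_not (s := univ) (· ∈ S)
  rw [filter_mem_eq_of_subset (subset_univ S), card_univ, Fintype.card_fin] at hsplit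
  simp only [sum_ite, filter_mem_eq_of_subset (subset_univ S), Finset.sum_const, Int.nsmul_eq_mul,
    mul_one]
  omega

namespace LatticePath

variable {K : ℕ}

def UnitSteps (ω : Fin (K + 1) → ℤ) : Prop :=
  ∀ k : Fin K, |ω k.succ - ω k.castSucc| = 1

def upSteps (ω : Fin (K + 1) → ℤ) : Finset (Fin K) :=
  univ.filter fun k => ω k.succ = ω k.castSucc + 1

def walks (K : ℕ) (a b : ℤ) : Set (Fin (K + 1) → ℤ) :=
  {ω | ω 0 = a ∧ ω (Fin.last K) = b ∧ UnitSteps ω}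

theorem succ_eq_of_unitSteps {ω : Fin (K + 1) → ℤ} (hs : UnitSteps ω) (k : Fin K) :
    ω k.succ = ω k.castSucc + if k ∈ upSteps ω then 1 else -1 := by
  have := hs k
  simp only [upSteps, mem_filter, mem_univ, true_and]
  split_ifs <;> cases abs_cases (ω k.succ - ω k.castSucc) <;> omega

theorem last_eq_of_unitSteps {ω : Fin (K + 1) → ℤ} (hs : UnitSteps ω) :
    ω (Fin.last K) = ω 0 + 2 * #(upSteps ω) - K := by
  have := Fin.sum_succ_sub_castSucc ω
  simp only [succ_eq_of_unitSteps hs, add_sub_cancel_left, Fin.sum_ite_mem_one_neg_one] at this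
  omega

theorem exists_eq_of_unitSteps {ω : Fin (K + 1) → ℤ} {u : ℤ} (hs : UnitSteps ω)
    (h0 : ω 0 ≤ u) (hK : u ≤ ω (Fin.last K)) : ∃ k, ω k = u := by
  by_contra! hne
  have hlt : ∀ k, ω k < u := Fin.induction (h0.lt_of_ne (hne 0)) fun k ih =>
    (by have := (abs_le.mp (hs k).le).2; omega : ω k.succ ≤ u).lt_of_ne (hne _)
  exact (hlt _).not_ge hK

section Reflection

variable (u : ℤ) (ω : Fin (K + 1) → ℤ)

/-- Reflecting `ω k` whenever `ω` has visited `u` by time `k` is the same as reflecting after the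
first visit, since the path sits at `u` at that moment; this form makes the map an involution
directly, with no hitting time to compute. -/
def reflectAfterHit (k : Fin (K + 1)) : ℤ :=
  if ∃ m ≤ k, ω m = u then 2 * u - ω k else ω k

variable {u ω}

theorem reflectAfterHit_eq_iff {k : Fin (K + 1)} : reflectAfterHit u ω k = u ↔ ω k = u := by
  unfold reflectAfterHit
  split_ifs <;> omega

theorem reflectAfterHit_involutive : Involutive (reflectAfterHit (K := K) u) := by
  intro ω
  funext k
  rw [reflectAfterHit]
  simp only [reflectAfterHit_eq_iff]
  rw [reflectAfterHit]
  split_ifs <;> ring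

theorem reflectAfterHit_zero : reflectAfterHit u ω 0 = ω 0 := by
  rw [reflectAfterHit]
  split_ifs with h
  · obtain ⟨m, hm, hmu⟩ := h
    rw [Fin.le_zero_iff.mp hm] at hmu
    omega
  · rfl

theorem reflectAfterHit_last (h : ∃ k, ω k = u) :
    reflectAfterHit u ω (Fin.last K) = 2 * u - ω (Fin.last K) := by
  obtain ⟨k, hk⟩ := h
  exact if_pos ⟨k, Fin.le_last k, hk⟩

theorem unitSteps_reflectAfterHit (hs : UnitSteps ω) : UnitSteps (reflectAfterHit u ω) := by
  intro k
  unfold reflectAfterHit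
  by_cases hc : ∃ m ≤ k.castSucc, ω m = u
  · obtain ⟨m, hm, hmu⟩ := hc
    rw [if_pos ⟨m, hm.trans (Fin.castSucc_le_succ k), hmu⟩, if_pos ⟨m, hm, hmu⟩, ← abs_neg]
    convert hs k using 2
    ring
  · rw [if_neg hc]
    split_ifs with hsucc
    · obtain ⟨m, hm, hmu⟩ := hsucc
      have hm' : m = k.succ := by
        by_contra hne
        exact hc ⟨m, Fin.le_castSucc_iff.mpr (hm.lt_of_ne hne), hmu⟩
      rw [hm'] at hmu
      rw [hmu, two_mul, add_sub_cancel_right, ← hmu]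
      exact hs k
    · exact hs k

end Reflection

theorem image_reflectAfterHit_walks {a b u : ℤ} (ha : a ≤ u) (hb : b ≤ u) :
    reflectAfterHit u '' walks K a (2 * u - b) = walks K a b ∩ {ω | ∃ k, ω k = u} := by
  ext ω
  constructor
  · rintro ⟨ρ, ⟨h0, hK, hs⟩, rfl⟩
    have hhit : ∃ k, ρ k = u := exists_eq_of_unitSteps hs (h0 ▸ ha) (by omega)
    refine ⟨⟨?_, ?_, unitSteps_reflectAfterHit hs⟩, ?_⟩
    · rw [reflectAfterHit_zero, h0]
    · rw [reflectAfterHit_last hhit, hK]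
      ring
    · obtain ⟨k, hk⟩ := hhit
      exact ⟨k, reflectAfterHit_eq_iff.mpr hk⟩
  · rintro ⟨⟨h0, hK, hs⟩, hhit⟩
    refine ⟨reflectAfterHit u ω, ⟨?_, ?_, unitSteps_reflectAfterHit hs⟩,
      reflectAfterHit_involutive ω⟩
    · rw [reflectAfterHit_zero, h0]
    · rw [reflectAfterHit_last hhit, hK]

def walkOfUpSteps (a : ℤ) (S : Finset (Fin K)) : Fin (K + 1) → ℤ :=
  Fin.induction a fun k x => x + if k ∈ S then 1 else -1

section WalkOfUpSteps

variable {a : ℤ} {S : Finset (Fin K)}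

@[simp]
theorem walkOfUpSteps_zero : walkOfUpSteps a S 0 = a :=
  Fin.induction_zero ..

theorem walkOfUpSteps_succ (k : Fin K) :
    walkOfUpSteps a S k.succ = walkOfUpSteps a S k.castSucc + if k ∈ S then 1 else -1 :=
  Fin.induction_succ ..

theorem unitSteps_walkOfUpSteps : UnitSteps (walkOfUpSteps a S) := by
  intro k
  rw [walkOfUpSteps_succ, add_sub_cancel_left]
  split_ifs <;> rfl

theorem upSteps_walkOfUpSteps : upSteps (walkOfUpSteps a S) = S := by
  ext k
  simp only [upSteps, mem_filter, mem_univ, true_and, walkOfUpSteps_succ]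
  split_ifs <;> simpa

theorem walkOfUpSteps_upSteps {ω : Fin (K + 1) → ℤ} (hs : UnitSteps ω) :
    walkOfUpSteps (ω 0) (upSteps ω) = ω := by
  funext k
  induction k using Fin.induction with
  | zero => exact walkOfUpSteps_zero
  | succ k ih => rw [walkOfUpSteps_succ, ih, succ_eq_of_unitSteps hs]

theorem walkOfUpSteps_injective : Injective (walkOfUpSteps (K := K) a) :=
  LeftInverse.injective fun _ => upSteps_walkOfUpSteps

end WalkOfUpSteps

theorem walks_eq_image_powersetCard {a b : ℤ} {n : ℕ} (h : b = a + 2 * n - K) :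
    walks K a b = walkOfUpSteps a '' ↑(powersetCard n (univ : Finset (Fin K))) := by
  ext ω
  constructor
  · rintro ⟨h0, hK, hs⟩
    refine ⟨upSteps ω, mem_powersetCard_univ.mpr ?_, h0 ▸ walkOfUpSteps_upSteps hs⟩
    have := last_eq_of_unitSteps hs
    omega
  · rintro ⟨S, hS, rfl⟩
    have hlast := last_eq_of_unitSteps (unitSteps_walkOfUpSteps (a := a) (S := S))
    rw [upSteps_walkOfUpSteps, walkOfUpSteps_zero, (mem_powersetCard_univ.mp hS)] at hlast
    exact ⟨walkOfUpSteps_zero, hlast.trans h.symm, unitSteps_walkOfUpSteps⟩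

end LatticePath

open LatticePath

theorem isBridge_iff_mem_walks {i j : ℤ} {B D : ℕ} (hj : j = i + B - D)
    {ω : Fin (B + D + 1) → ℤ} : IsBridge i j B D ω ↔ ω ∈ walks (B + D) i j := by
  refine ⟨fun ⟨h0, hK, hs, _⟩ => ⟨h0, hK, hs⟩, fun ⟨h0, hK, hs⟩ => ⟨h0, hK, hs, ?_⟩⟩
  have := last_eq_of_unitSteps hs
  change #(upSteps ω) = B
  push_cast at this
  omega

/-- Reflection principle, upper bound: if `i < u` and `j < u`, the number of integer
grid bridges from `i` to `j` with `B` upward jumps that attain the value `u` equals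
`C(K, B_u)` with `B_u = B - j + u = B + (u - j)`. -/
theorem reflection_upper_count (i j u : ℤ) (B D : ℕ) (hj : j = i + B - D)
    (hiu : i < u) (hju : j < u) :
    Set.ncard {ω : Fin (B + D + 1) → ℤ |
        IsBridge i j B D ω ∧ ∃ k : Fin (B + D + 1), ω k = u}
      = Nat.choose (B + D) (B + (u - j).toNat) := by
  have hreflected : 2 * u - j = i + 2 * ((B + (u - j).toNat : ℕ) : ℤ) - (B + D : ℕ) := by
    push_cast
    rw [Int.toNat_of_nonneg (by omega)]
    omega
  have hbridges : {ω | IsBridge i j B D ω ∧ ∃ k, ω k = u} = reflectAfterHit u ''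
      (walkOfUpSteps i '' ↑(powersetCard (B + (u - j).toNat) (univ : Finset (Fin (B + D))))) := by
    rw [← walks_eq_image_powersetCard hreflected, image_reflectAfterHit_walks hiu.le hju.le]
    exact Set.ext fun ω => and_congr_left' (isBridge_iff_mem_walks hj)
  rw [hbridges, Set.ncard_image_of_injective _ reflectAfterHit_involutive.injective,
    Set.ncard_image_of_injective _ walkOfUpSteps_injective, Set.ncard_coe_finset,
    card_powersetCard, card_univ, Fintype.card_fin]
end

section
/- (Reflection principle, lower bound.) Suppose i > l and j > l. If B + l ≥ j, then the number of integer grid bridges from i to j with B upward jumps that attain the value l at some index (i.e., ω k = l for some k ≤ K) equals C(K, B_l), where B_l = B + l − j. If B + l < j, then no such bridge attains the value l. -/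
open Finset

section UnitStepPath

variable {n : ℕ}

def IsUnitStepPath (ω : Fin (n + 1) → ℤ) : Prop :=
  ∀ k : Fin n, |ω k.succ - ω k.castSucc| = 1

def upSteps (ω : Fin (n + 1) → ℤ) : Finset (Fin n) :=
  univ.filter fun k => ω k.succ = ω k.castSucc + 1

def unitStepPaths (n : ℕ) (a b : ℤ) : Set (Fin (n + 1) → ℤ) :=
  {ω | IsUnitStepPath ω ∧ ω 0 = a ∧ ω (Fin.last n) = b}

def pathOfUpSteps (a : ℤ) (S : Finset (Fin n)) : Fin (n + 1) → ℤ :=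
  fun m => a + Fin.partialSum (fun k => if k ∈ S then 1 else -1) m

lemma pathOfUpSteps_zero (a : ℤ) (S : Finset (Fin n)) : pathOfUpSteps a S 0 = a := by
  simp [pathOfUpSteps]

lemma pathOfUpSteps_succ (a : ℤ) (S : Finset (Fin n)) (k : Fin n) :
    pathOfUpSteps a S k.succ = pathOfUpSteps a S k.castSucc + if k ∈ S then 1 else -1 := by
  simp only [pathOfUpSteps, Fin.partialSum_succ, add_assoc]

lemma pathOfUpSteps_last (a : ℤ) (S : Finset (Fin n)) :
    pathOfUpSteps a S (Fin.last n) = a + 2 * #S - n := by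
  have hsum : ∑ k, (if k ∈ S then (1 : ℤ) else -1) = #S - #Sᶜ := by
    simp [sum_ite, filter_not, compl_eq_univ_sdiff, sub_eq_add_neg]
  have hcompl : #Sᶜ = n - #S := by rw [card_compl, Fintype.card_fin]
  have hS : #S ≤ n := card_le_univ S |>.trans_eq (Fintype.card_fin n)
  rw [pathOfUpSteps, Fin.partialSum, Fin.val_last,
    List.take_of_length_le (List.length_ofFn).le, List.sum_ofFn]
  omega

lemma isUnitStepPath_pathOfUpSteps (a : ℤ) (S : Finset (Fin n)) :
    IsUnitStepPath (pathOfUpSteps a S) := by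
  intro k
  rw [pathOfUpSteps_succ]
  split_ifs <;> simp

lemma upSteps_pathOfUpSteps (a : ℤ) (S : Finset (Fin n)) :
    upSteps (pathOfUpSteps a S) = S := by
  ext k
  simp only [upSteps, mem_filter, mem_univ, true_and, pathOfUpSteps_succ]
  split_ifs with hk <;> simp [hk]

namespace IsUnitStepPath

variable {ω : Fin (n + 1) → ℤ}

lemma apply_succ (hω : IsUnitStepPath ω) (k : Fin n) :
    ω k.succ = ω k.castSucc + if k ∈ upSteps ω then 1 else -1 := by
  have hstep := abs_eq zero_le_one |>.mp (hω k)
  simp only [upSteps, mem_filter, mem_univ, true_and]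
  split_ifs <;> omega

lemma eq_pathOfUpSteps (hω : IsUnitStepPath ω) : ω = pathOfUpSteps (ω 0) (upSteps ω) := by
  funext m
  induction m using Fin.induction with
  | zero => rw [pathOfUpSteps_zero]
  | succ k ih => rw [hω.apply_succ, pathOfUpSteps_succ, ← ih]

lemma apply_last (hω : IsUnitStepPath ω) :
    ω (Fin.last n) = ω 0 + 2 * #(upSteps ω) - n := by
  conv_lhs => rw [hω.eq_pathOfUpSteps]
  exact pathOfUpSteps_last _ _

lemma exists_apply_eq (hω : IsUnitStepPath ω) {l : ℤ} (h0 : ω 0 ≤ l) (m : Fin (n + 1))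
    (hm : l ≤ ω m) : ∃ k, ω k = l := by
  induction m using Fin.induction with
  | zero => exact ⟨0, le_antisymm h0 hm⟩
  | succ k ih =>
    by_cases hk : l ≤ ω k.castSucc
    · exact ih hk
    · have hstep := hω.apply_succ k
      exact ⟨k.succ, by split_ifs at hstep <;> omega⟩

end IsUnitStepPath

lemma ncard_unitStepPaths {a b : ℤ} {U : ℕ} (hb : b = a + 2 * U - n) :
    (unitStepPaths n a b).ncard = n.choose U := by
  have himage :
      unitStepPaths n a b = pathOfUpSteps a '' ↑(powersetCard U (univ : Finset (Fin n))) := by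
    ext ω
    constructor
    · rintro ⟨hω, h0, hlast⟩
      refine ⟨upSteps ω, ?_, by rw [← h0, ← hω.eq_pathOfUpSteps]⟩
      have := hω.apply_last
      rw [mem_coe, mem_powersetCard_univ]
      omega
    · rintro ⟨S, hS, rfl⟩
      rw [mem_coe, mem_powersetCard_univ] at hS
      exact ⟨isUnitStepPath_pathOfUpSteps a S, pathOfUpSteps_zero a S,
        by rw [pathOfUpSteps_last, hS, hb]⟩
  have hinj : Function.Injective (pathOfUpSteps (n := n) a) :=
    Function.LeftInverse.injective (upSteps_pathOfUpSteps a)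
  rw [himage, Set.ncard_image_of_injective _ hinj, Set.ncard_coe_finset, card_powersetCard,
    card_univ, Fintype.card_fin]

end UnitStepPath

section Reflection

variable {n : ℕ} (l : ℤ)

/-- Reflection through `l` up to and including the first visit to `l`. Since the reflected path
visits `l` at the same times as `ω`, this is an involution on all paths. -/
def reflectUntilHit (ω : Fin (n + 1) → ℤ) : Fin (n + 1) → ℤ :=
  fun k => if ∀ m < k, ω m ≠ l then 2 * l - ω k else ω k

lemma reflectUntilHit_apply_eq_iff {ω : Fin (n + 1) → ℤ} {k : Fin (n + 1)} :
    reflectUntilHit l ω k = l ↔ ω k = l := by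
  unfold reflectUntilHit
  split_ifs <;> omega

lemma reflectUntilHit_involutive : Function.Involutive (reflectUntilHit (n := n) l) := by
  intro ω
  funext k
  conv_lhs => rw [reflectUntilHit]
  simp only [ne_eq, reflectUntilHit_apply_eq_iff]
  unfold reflectUntilHit
  split_ifs <;> ring

lemma reflectUntilHit_zero (ω : Fin (n + 1) → ℤ) : reflectUntilHit l ω 0 = 2 * l - ω 0 :=
  if_pos fun m hm => absurd hm (Fin.not_lt_zero m)

lemma reflectUntilHit_last {ω : Fin (n + 1) → ℤ} (hit : ∃ k, ω k = l)
    (hlast : ω (Fin.last n) ≠ l) : reflectUntilHit l ω (Fin.last n) = ω (Fin.last n) := by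
  obtain ⟨k, hk⟩ := hit
  have hlt : k < Fin.last n := (Fin.le_last k).lt_of_ne fun h => hlast (h ▸ hk)
  exact if_neg fun h => h k hlt hk

lemma IsUnitStepPath.reflectUntilHit {ω : Fin (n + 1) → ℤ} (hω : IsUnitStepPath ω) :
    IsUnitStepPath (reflectUntilHit l ω) := by
  intro k
  have hlt : ∀ m, m < k.succ ↔ m < k.castSucc ∨ m = k.castSucc := fun m => by
    simp only [Fin.lt_def, Fin.ext_iff, Fin.val_succ, Fin.val_castSucc]
    omega
  simp only [_root_.reflectUntilHit, hlt, or_imp, forall_and, forall_eq]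
  by_cases hbefore : ∀ m < k.castSucc, ω m ≠ l
  · by_cases hhit : ω k.castSucc = l
    · rw [if_neg fun h => h.2 hhit, if_pos hbefore, hhit, show 2 * l - l = l by ring]
      exact hhit ▸ hω k
    · rw [if_pos ⟨hbefore, hhit⟩, if_pos hbefore, ← abs_neg]
      convert hω k using 2
      ring
  · simpa [hbefore] using hω k

theorem ncard_unitStepPaths_hit {a b : ℤ} (ha : l < a) (hb : l < b) :
    {ω ∈ unitStepPaths n a b | ∃ k, ω k = l}.ncard =
      (unitStepPaths n (2 * l - a) b).ncard := by
  have hto : Set.MapsTo (reflectUntilHit l) {ω ∈ unitStepPaths n a b | ∃ k, ω k = l}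
      (unitStepPaths n (2 * l - a) b) := by
    rintro ω ⟨⟨hω, h0, hlast⟩, hit⟩
    exact ⟨hω.reflectUntilHit l, by rw [reflectUntilHit_zero, h0],
      by rw [reflectUntilHit_last l hit (by omega), hlast]⟩
  have hfrom : Set.MapsTo (reflectUntilHit l) (unitStepPaths n (2 * l - a) b)
      {ω ∈ unitStepPaths n a b | ∃ k, ω k = l} := by
    rintro ω ⟨hω, h0, hlast⟩
    obtain ⟨k, hk⟩ := hω.exists_apply_eq (l := l) (by omega) (Fin.last n) (by omega)
    exact ⟨⟨hω.reflectUntilHit l, by rw [reflectUntilHit_zero, h0]; ring,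
      by rw [reflectUntilHit_last l ⟨k, hk⟩ (by omega), hlast]⟩,
      k, (reflectUntilHit_apply_eq_iff l).mpr hk⟩
  have hinv := reflectUntilHit_involutive (n := n) l
  exact (Set.InvOn.bijOn ⟨fun ω _ => hinv ω, fun ω _ => hinv ω⟩ hto hfrom).ncard_eq

lemma add_le_of_mem_unitStepPaths_of_hit {a b : ℤ} (hb : b ≠ l) {ω : Fin (n + 1) → ℤ}
    (hω : ω ∈ unitStepPaths n a b) (hit : ∃ k, ω k = l) : a + b ≤ 2 * l + n := by
  obtain ⟨hω, h0, hlast⟩ := hω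
  have hreflected := (hω.reflectUntilHit l).apply_last
  rw [reflectUntilHit_zero, reflectUntilHit_last l hit (by omega), h0, hlast] at hreflected
  have hcard := card_le_univ (upSteps (reflectUntilHit l ω))
  rw [Fintype.card_fin] at hcard
  omega

end Reflection

lemma isBridge_iff {i j : ℤ} {B D : ℕ} (hj : j = i + B - D) {ω : Fin (B + D + 1) → ℤ} :
    IsBridge i j B D ω ↔ ω ∈ unitStepPaths (B + D) i j := by
  refine ⟨fun ⟨h0, hlast, hω, _⟩ => ⟨hω, h0, hlast⟩,
    fun ⟨hω, h0, hlast⟩ => ⟨h0, hlast, hω, ?_⟩⟩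
  have hup := hω.apply_last
  rw [h0, hlast] at hup
  push_cast at hup
  change #(upSteps ω) = B
  omega

/-- Reflection principle, lower bound: if `i > l` and `j > l`, then when `B + l ≥ j`
the number of integer grid bridges from `i` to `j` with `B` upward jumps attaining
the value `l` equals `C(K, B_l)` with `B_l = B + l - j = B - (j - l)`; and when
`B + l < j` no bridge attains the value `l`. -/
theorem reflection_lower_count (i j l : ℤ) (B D : ℕ) (hj : j = i + B - D)
    (hil : l < i) (hjl : l < j) :
    (j ≤ (B : ℤ) + l →
      Set.ncard {ω : Fin (B + D + 1) → ℤ |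
          IsBridge i j B D ω ∧ ∃ k : Fin (B + D + 1), ω k = l}
        = Nat.choose (B + D) (B - (j - l).toNat)) ∧
    ((B : ℤ) + l < j →
      {ω : Fin (B + D + 1) → ℤ |
          IsBridge i j B D ω ∧ ∃ k : Fin (B + D + 1), ω k = l} = ∅) := by
  have hbridges : {ω : Fin (B + D + 1) → ℤ | IsBridge i j B D ω ∧ ∃ k, ω k = l}
      = {ω ∈ unitStepPaths (B + D) i j | ∃ k, ω k = l} := by
    simp only [isBridge_iff hj]
  rw [hbridges]
  refine ⟨fun hle => ?_, fun hlt => ?_⟩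
  · rw [ncard_unitStepPaths_hit l hil hjl,
      ncard_unitStepPaths (U := D + (j - l).toNat) (by push_cast; omega),
      ← Nat.choose_symm (by omega)]
    congr 1
    omega
  · refine Set.eq_empty_of_forall_notMem fun ω ⟨hω, hit⟩ => ?_
    have := add_le_of_mem_unitStepPaths_of_hit l hjl.ne' hω hit
    push_cast at this
    omega
end

section
/- (Double reflection, l before u.) Suppose l < i < u and l < j < u. If B ≥ u − l, then the number of integer grid bridges from i to j with B upward jumps that attain the value l at some index s and attain the value u at some later index t > s equals C(K, B_{lu}), where B_{lu} = B − (u − l); such bridges are equinumerous with the unrestricted K-step ±1 paths from i ending at the doubly reflected endpoint j − 2(u − l). If B < u − l, then no bridge attains l at some index and u at a later index. -/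
open Finset

namespace DRefl

variable {N : ℕ}

/-- steps are ±1 -/
def Steps (ω : Fin (N+1) → ℤ) : Prop := ∀ k : Fin N, |ω k.succ - ω k.castSucc| = 1

/-- extension of a path to all of ℕ -/
def pad (ω : Fin (N+1) → ℤ) (n : ℕ) : ℤ := ω ⟨min n N, by omega⟩

lemma pad_fin (ω : Fin (N+1) → ℤ) (k : Fin (N+1)) : pad ω k.val = ω k := by
  unfold pad
  congr 1
  exact Fin.ext (by simp [Nat.min_eq_left (by omega : (k : ℕ) ≤ N)])

lemma pad_succ (ω : Fin (N+1) → ℤ) (k : Fin N) : pad ω (k.val + 1) = ω k.succ := by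
  have := pad_fin ω k.succ
  simpa using this

lemma pad_castSucc (ω : Fin (N+1) → ℤ) (k : Fin N) : pad ω k.val = ω k.castSucc := by
  have := pad_fin ω k.castSucc
  simpa using this

lemma pad_zero (ω : Fin (N+1) → ℤ) : pad ω 0 = ω 0 := by
  have := pad_fin ω 0
  simpa using this

lemma pad_last (ω : Fin (N+1) → ℤ) : pad ω N = ω (Fin.last N) := by
  have := pad_fin ω (Fin.last N)
  simpa using this

lemma steps_pad {ω : Fin (N+1) → ℤ} (hs : Steps ω) {n : ℕ} (hn : n < N) :
    |pad ω (n+1) - pad ω n| = 1 := by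
  have := hs ⟨n, hn⟩
  rwa [← pad_succ ω ⟨n, hn⟩, ← pad_castSucc ω ⟨n, hn⟩] at this

lemma habs' {x y : ℤ} (h : |y - x| = 1) : y = x + 1 ∨ y = x - 1 := by
  rcases (abs_eq (by norm_num : (0:ℤ) ≤ 1)).1 h with h' | h' <;> omega

lemma tele (ω : Fin (N+1) → ℤ) (a b : ℕ) (hab : a ≤ b) :
    pad ω b - pad ω a = ∑ n ∈ Finset.Ico a b, (pad ω (n+1) - pad ω n) := by
  rw [Finset.sum_Ico_eq_sub _ hab, Finset.sum_range_sub (pad ω), Finset.sum_range_sub (pad ω)]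
  ring

lemma two_mul_upcount (ω : Fin (N+1) → ℤ) (hs : Steps ω) (a b : ℕ) (hab : a ≤ b) (hb : b ≤ N) :
    2 * (((Finset.Ico a b).filter fun n => pad ω (n+1) = pad ω n + 1).card : ℤ)
      = pad ω b - pad ω a + (b - a : ℕ) := by
  classical
  have ht := tele ω a b hab
  rw [← Finset.sum_filter_add_sum_filter_not (Finset.Ico a b)
    (fun n => pad ω (n+1) = pad ω n + 1)] at ht
  have h1 : ∑ n ∈ (Finset.Ico a b).filter (fun n => pad ω (n+1) = pad ω n + 1),
      (pad ω (n+1) - pad ω n)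
      = (((Finset.Ico a b).filter fun n => pad ω (n+1) = pad ω n + 1).card : ℤ) := by
    rw [show (((Finset.Ico a b).filter fun n => pad ω (n+1) = pad ω n + 1).card : ℤ)
        = ∑ _n ∈ (Finset.Ico a b).filter (fun n => pad ω (n+1) = pad ω n + 1), (1:ℤ) by
      rw [Finset.sum_const, nsmul_eq_mul, mul_one]]
    refine Finset.sum_congr rfl fun n hn => ?_
    have := (Finset.mem_filter.1 hn).2
    omega
  have h2 : ∑ n ∈ (Finset.Ico a b).filter (fun n => ¬ (pad ω (n+1) = pad ω n + 1)),
      (pad ω (n+1) - pad ω n)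
      = -(((Finset.Ico a b).filter (fun n => ¬ (pad ω (n+1) = pad ω n + 1))).card : ℤ) := by
    rw [show -((((Finset.Ico a b).filter (fun n => ¬ (pad ω (n+1) = pad ω n + 1))).card : ℤ))
        = ∑ _n ∈ (Finset.Ico a b).filter (fun n => ¬ (pad ω (n+1) = pad ω n + 1)), (-1:ℤ) by
      rw [Finset.sum_const, nsmul_eq_mul, mul_neg_one]]
    refine Finset.sum_congr rfl fun n hn => ?_
    obtain ⟨hmem, hnp⟩ := Finset.mem_filter.1 hn
    have hlt : n < N := lt_of_lt_of_le (Finset.mem_Ico.1 hmem).2 hb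
    have habs := habs' (steps_pad hs hlt)
    omega
  have h3 : ((Finset.Ico a b).filter fun n => pad ω (n+1) = pad ω n + 1).card
      + ((Finset.Ico a b).filter (fun n => ¬ (pad ω (n+1) = pad ω n + 1))).card = b - a := by
    rw [Finset.card_filter_add_card_filter_not, Nat.card_Ico]
  rw [h1, h2] at ht
  have h4 := congrArg (Nat.cast : ℕ → ℤ) h3
  push_cast [Nat.cast_sub hab] at h4 ⊢
  set c1 := (((Finset.Ico a b).filter fun n => pad ω (n+1) = pad ω n + 1).card : ℤ)
  set c2 := (((Finset.Ico a b).filter (fun n => ¬ (pad ω (n+1) = pad ω n + 1))).card : ℤ)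
  linarith

/-- discrete intermediate value theorem, downward crossing -/
lemma ivt {ω : Fin (N+1) → ℤ} (hs : Steps ω) (c : ℤ) (s t : Fin (N+1)) (hst : s ≤ t)
    (h1 : c < ω s) (h2 : ω t < c) :
    ∃ m : Fin (N+1), s ≤ m ∧ m ≤ t ∧ ω m = c := by
  by_contra hcon
  push_neg at hcon
  have hstv : s.val ≤ t.val := hst
  have key : ∀ n : ℕ, s.val + n ≤ t.val → c < pad ω (s.val + n) := by
    intro n
    induction n with
    | zero =>
      intro _
      simpa [Nat.add_zero, pad_fin] using h1
    | succ n ih =>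
      intro hn
      show c < pad ω (s.val + n + 1)
      have hn' : s.val + n ≤ t.val := by omega
      have hc := ih hn'
      have hlt : s.val + n < N := by
        have := t.isLt
        omega
      have habs := habs' (steps_pad hs hlt)
      have hne : pad ω (s.val + n + 1) ≠ c := by
        have hmle : s.val + n + 1 ≤ N := by omega
        have hm := hcon ⟨s.val + n + 1, by omega⟩
          (by rw [Fin.le_def]; simp; omega) (by rw [Fin.le_def]; simp; omega)
        rwa [← pad_fin ω ⟨s.val + n + 1, by omega⟩] at hm
      omega
  have hfin := key (t.val - s.val) (by omega)
  rw [show s.val + (t.val - s.val) = t.val by omega, pad_fin] at hfin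
  omega

/-! ### Reflection -/

noncomputable def hitTime (a : ℤ) (ω : Fin (N+1) → ℤ) : Fin (N+1) :=
  if h : (Finset.univ.filter fun k => ω k = a).Nonempty
  then (Finset.univ.filter fun k => ω k = a).min' h else 0

lemma hit_nonempty {a : ℤ} {ω : Fin (N+1) → ℤ} (h : ∃ k, ω k = a) :
    (Finset.univ.filter fun k => ω k = a).Nonempty :=
  ⟨h.choose, Finset.mem_filter.2 ⟨Finset.mem_univ _, h.choose_spec⟩⟩

lemma hitTime_spec {a : ℤ} {ω : Fin (N+1) → ℤ} (h : ∃ k, ω k = a) :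
    ω (hitTime a ω) = a := by
  unfold hitTime
  rw [dif_pos (hit_nonempty h)]
  exact (Finset.mem_filter.1 (Finset.min'_mem _ (hit_nonempty h))).2

lemma hitTime_min {a : ℤ} {ω : Fin (N+1) → ℤ} {k : Fin (N+1)} (hk : ω k = a) :
    hitTime a ω ≤ k := by
  unfold hitTime
  rw [dif_pos (hit_nonempty ⟨k, hk⟩)]
  exact Finset.min'_le _ k (Finset.mem_filter.2 ⟨Finset.mem_univ k, hk⟩)

noncomputable def Refl (a : ℤ) (ω : Fin (N+1) → ℤ) : Fin (N+1) → ℤ :=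
  fun k => if k ≤ hitTime a ω then ω k else 2*a - ω k

lemma refl_le {a : ℤ} {ω : Fin (N+1) → ℤ} {k : Fin (N+1)} (hk : k ≤ hitTime a ω) :
    Refl a ω k = ω k := if_pos hk

lemma refl_zero (a : ℤ) (ω : Fin (N+1) → ℤ) : Refl a ω 0 = ω 0 :=
  refl_le (Fin.zero_le _)

lemma refl_ge {a : ℤ} {ω : Fin (N+1) → ℤ} (h : ∃ k, ω k = a) {k : Fin (N+1)}
    (hk : hitTime a ω ≤ k) : Refl a ω k = 2*a - ω k := by
  unfold Refl
  split
  · next h' =>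
    have hke : k = hitTime a ω := le_antisymm h' hk
    rw [hke, hitTime_spec h]
    ring
  · rfl

lemma refl_eq_iff {a : ℤ} {ω : Fin (N+1) → ℤ} (k : Fin (N+1)) :
    Refl a ω k = a ↔ ω k = a := by
  unfold Refl
  split
  · exact Iff.rfl
  · omega

lemma hitTime_refl (a : ℤ) (ω : Fin (N+1) → ℤ) : hitTime a (Refl a ω) = hitTime a ω := by
  have hfil : (Finset.univ.filter fun k => Refl a ω k = a)
      = Finset.univ.filter fun k => ω k = a := by
    ext k
    simp [Finset.mem_filter, refl_eq_iff]
  unfold hitTime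
  rw [hfil]

lemma refl_refl (a : ℤ) (ω : Fin (N+1) → ℤ) : Refl a (Refl a ω) = ω := by
  funext k
  show (if k ≤ hitTime a (Refl a ω) then Refl a ω k else 2*a - Refl a ω k) = ω k
  rw [hitTime_refl]
  by_cases hk : k ≤ hitTime a ω
  · rw [if_pos hk, refl_le hk]
  · rw [if_neg hk]
    have : Refl a ω k = 2*a - ω k := if_neg hk
    rw [this]
    ring

lemma refl_steps {a : ℤ} {ω : Fin (N+1) → ℤ} (h : ∃ k, ω k = a) (hs : Steps ω) :
    Steps (Refl a ω) := by
  intro k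
  have hcs : k.castSucc ≤ k.succ := by
    rw [Fin.le_def]
    simp
  by_cases h1 : k.succ ≤ hitTime a ω
  · rw [refl_le h1, refl_le (le_trans hcs h1)]
    exact hs k
  · have h1' : hitTime a ω ≤ k.succ := le_of_not_ge h1
    by_cases h2 : k.castSucc ≤ hitTime a ω
    · have hceq : k.castSucc = hitTime a ω := by
        apply le_antisymm h2
        rw [Fin.le_def] at h1 h2 ⊢
        simp only [Fin.val_succ, Fin.coe_castSucc] at *
        omega
      rw [refl_le h2, refl_ge h h1']
      have hca : ω k.castSucc = a := by rw [hceq, hitTime_spec h]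
      have habs := habs' (hs k)
      rw [abs_eq (by norm_num : (0:ℤ) ≤ 1)]
      omega
    · rw [refl_ge h h1', refl_ge h (le_of_not_ge h2)]
      have habs := habs' (hs k)
      rw [abs_eq (by norm_num : (0:ℤ) ≤ 1)]
      omega

/-! ### Counting -/

def upSet (ω : Fin (N+1) → ℤ) : Finset (Fin N) :=
  Finset.univ.filter fun k => ω k.succ = ω k.castSucc + 1

lemma card_up_eq (ω : Fin (N+1) → ℤ) :
    (upSet ω).card = ((Finset.Ico 0 N).filter fun n => pad ω (n+1) = pad ω n + 1).card := by
  refine Finset.card_bij (fun (k : Fin N) _ => (k.val : ℕ)) ?_ ?_ ?_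
  · intro k hk
    simp only [upSet, Finset.mem_filter, Finset.mem_univ, true_and] at hk
    simp only [Finset.mem_filter, Finset.mem_Ico]
    exact ⟨⟨Nat.zero_le _, k.isLt⟩, by rw [pad_succ, pad_castSucc]; exact hk⟩
  · intro a _ b _ hab
    exact Fin.ext hab
  · intro n hn
    simp only [Finset.mem_filter, Finset.mem_Ico] at hn
    refine ⟨⟨n, hn.1.2⟩, ?_, rfl⟩
    simp only [upSet, Finset.mem_filter, Finset.mem_univ, true_and]
    rw [← pad_succ ω ⟨n, hn.1.2⟩, ← pad_castSucc ω ⟨n, hn.1.2⟩]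
    exact hn.2

def ofSet (i : ℤ) (A : Finset (Fin N)) : Fin (N+1) → ℤ :=
  fun k => i + 2*((A.filter fun r : Fin N => (r : ℕ) < (k : ℕ)).card : ℤ) - (k : ℕ)

lemma ofSet_zero (i : ℤ) (A : Finset (Fin N)) : ofSet i A 0 = i := by
  simp [ofSet]

lemma card_filter_succ (A : Finset (Fin N)) (n : ℕ) (hn : n < N) :
    (A.filter fun r : Fin N => (r : ℕ) < n+1).card
      = (A.filter fun r : Fin N => (r : ℕ) < n).card
        + (if (⟨n, hn⟩ : Fin N) ∈ A then 1 else 0) := by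
  classical
  have hsplit : (A.filter fun r : Fin N => (r : ℕ) < n+1)
      = (A.filter fun r : Fin N => (r : ℕ) < n) ∪ (A.filter fun r : Fin N => r = ⟨n, hn⟩) := by
    ext r
    simp only [Finset.mem_filter, Finset.mem_union]
    constructor
    · rintro ⟨hA, hr⟩
      rcases Nat.lt_succ_iff_lt_or_eq.1 hr with h | h
      · exact Or.inl ⟨hA, h⟩
      · exact Or.inr ⟨hA, Fin.ext h⟩
    · rintro (⟨hA, hr⟩ | ⟨hA, hr⟩)
      · exact ⟨hA, by omega⟩
      · refine ⟨hA, ?_⟩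
        rw [hr]
        exact Nat.lt_succ_self n
  have hdisj : Disjoint (A.filter fun r : Fin N => (r : ℕ) < n)
      (A.filter fun r : Fin N => r = ⟨n, hn⟩) := by
    refine Finset.disjoint_left.2 ?_
    intro r h1 h2
    obtain ⟨_, hr1⟩ := Finset.mem_filter.1 h1
    obtain ⟨_, hr2⟩ := Finset.mem_filter.1 h2
    rw [hr2] at hr1
    exact absurd hr1 (lt_irrefl n)
  rw [hsplit, Finset.card_union_of_disjoint hdisj, Finset.filter_eq']
  split <;> simp

lemma ofSet_step (i : ℤ) (A : Finset (Fin N)) (k : Fin N) :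
    ofSet i A k.succ = ofSet i A k.castSucc + (if k ∈ A then 1 else -1) := by
  have hc := card_filter_succ A k.val k.isLt
  have hk : (⟨k.val, k.isLt⟩ : Fin N) = k := Fin.ext rfl
  rw [hk] at hc
  simp only [ofSet, Fin.val_succ, Fin.coe_castSucc]
  rw [hc]
  split <;> push_cast <;> ring

lemma ofSet_last (i e : ℤ) (m : ℕ) (A : Finset (Fin N)) (hA : A.card = m)
    (he : e = i + 2*(m : ℤ) - N) : ofSet i A (Fin.last N) = e := by
  simp only [ofSet, Fin.val_last]
  have hfull : (A.filter fun r : Fin N => (r : ℕ) < N) = A :=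
    Finset.filter_true_of_mem (fun r _ => r.isLt)
  rw [hfull, hA, he]

lemma ofSet_steps (i : ℤ) (A : Finset (Fin N)) : Steps (ofSet i A) := by
  intro k
  rw [ofSet_step]
  split <;> simp

lemma upSet_ofSet (i : ℤ) (A : Finset (Fin N)) : upSet (ofSet i A) = A := by
  ext k
  simp only [upSet, Finset.mem_filter, Finset.mem_univ, true_and]
  rw [ofSet_step]
  by_cases hk : k ∈ A
  · simp [hk]
  · simp only [hk, if_false, iff_false]
    intro hEq
    omega

lemma ofSet_upSet {i : ℤ} {ω : Fin (N+1) → ℤ} (h0 : ω 0 = i) (hs : Steps ω) :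
    ofSet i (upSet ω) = ω := by
  funext k
  have main : ∀ n, n ≤ N →
      i + 2*(((upSet ω).filter fun r : Fin N => (r : ℕ) < n).card : ℤ) - n = pad ω n := by
    intro n
    induction n with
    | zero =>
      intro _
      rw [pad_zero, h0]
      simp
    | succ n ih =>
      intro hn
      have hn' : n < N := hn
      have ihh := ih (le_of_lt hn')
      rw [card_filter_succ (upSet ω) n hn']
      have habs := habs' (steps_pad hs hn')
      have hup : ((⟨n, hn'⟩ : Fin N) ∈ upSet ω) ↔ pad ω (n+1) = pad ω n + 1 := by
        simp only [upSet, Finset.mem_filter, Finset.mem_univ, true_and]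
        rw [← pad_succ ω ⟨n, hn'⟩, ← pad_castSucc ω ⟨n, hn'⟩]
      by_cases hmem : (⟨n, hn'⟩ : Fin N) ∈ upSet ω
      · have h1 := hup.1 hmem
        rw [if_pos hmem]
        push_cast
        linarith
      · have h1 : pad ω (n+1) = pad ω n - 1 := by
          rcases habs with h | h
          · exact absurd (hup.2 h) hmem
          · exact h
        rw [if_neg hmem]
        push_cast
        linarith
  have hmain := main k.val (by omega)
  rw [pad_fin] at hmain
  exact hmain

lemma card_upSet {i e : ℤ} {m : ℕ} {ω : Fin (N+1) → ℤ} (h0 : ω 0 = i)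
    (hl : ω (Fin.last N) = e) (hs : Steps ω) (he : e = i + 2*(m : ℤ) - N) :
    (upSet ω).card = m := by
  have h2 := two_mul_upcount ω hs 0 N (Nat.zero_le _) le_rfl
  rw [pad_zero, pad_last, h0, hl] at h2
  rw [card_up_eq ω]
  set c := ((Finset.Ico 0 N).filter fun n => pad ω (n+1) = pad ω n + 1).card with hc
  have : ((N - 0 : ℕ) : ℤ) = (N : ℤ) := by omega
  rw [this] at h2
  have : 2 * (c : ℤ) = 2 * (m : ℤ) := by rw [h2, he]; ring
  omega

lemma count_paths (i e : ℤ) (m : ℕ) (hmN : m ≤ N) (he : e = i + 2*(m : ℤ) - N) :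
    Nat.card {ω : Fin (N+1) → ℤ | ω 0 = i ∧ ω (Fin.last N) = e ∧ Steps ω} = N.choose m := by
  classical
  have hEquiv : {ω : Fin (N+1) → ℤ | ω 0 = i ∧ ω (Fin.last N) = e ∧ Steps ω}
      ≃ {A : Finset (Fin N) // A.card = m} := by
    refine ⟨fun ω => ⟨upSet ω.1, card_upSet ω.2.1 ω.2.2.1 ω.2.2.2 he⟩,
      fun A => ⟨ofSet i A.1, ofSet_zero i A.1, ofSet_last i e m A.1 A.2 he, ofSet_steps i A.1⟩,
      ?_, ?_⟩
    · rintro ⟨ω, h0, hl, hs⟩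
      exact Subtype.ext (ofSet_upSet h0 hs)
    · rintro ⟨A, hA⟩
      exact Subtype.ext (upSet_ofSet i A)
  rw [Nat.card_congr hEquiv, Nat.card_eq_fintype_card, Fintype.card_finset_len, Fintype.card_fin]

end DRefl

open DRefl

lemma bridge_char (i j : ℤ) (B D : ℕ) (hj : j = i + B - D) (ω : Fin (B+D+1) → ℤ) :
    IsBridge i j B D ω ↔ (ω 0 = i ∧ ω (Fin.last (B+D)) = j ∧ Steps ω) := by
  constructor
  · rintro ⟨h0, hl, hs, _⟩
    exact ⟨h0, hl, hs⟩
  · rintro ⟨h0, hl, hs⟩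
    refine ⟨h0, hl, hs, ?_⟩
    have : (upSet ω).card = B :=
      card_upSet h0 hl hs (by rw [hj]; push_cast; ring)
    exact this

/-- Double reflection, `l` before `u`: with `l < i < u` and `l < j < u`, if
`B ≥ u - l` then the number of integer grid bridges from `i` to `j` with `B` upward
jumps attaining `l` at some index and `u` at some strictly later index equals
`C(K, B_{lu})` with `B_{lu} = B - (u - l)`; if `B < u - l` no such bridge exists. -/
theorem double_reflection_lu (i j l u : ℤ) (B D : ℕ) (hj : j = i + B - D)
    (hli : l < i) (hiu : i < u) (hlj : l < j) (hju : j < u) :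
    (u - l ≤ (B : ℤ) →
      Set.ncard {ω : Fin (B + D + 1) → ℤ | IsBridge i j B D ω ∧
          ∃ s t : Fin (B + D + 1), s < t ∧ ω s = l ∧ ω t = u}
        = Nat.choose (B + D) (B - (u - l).toNat)) ∧
    ((B : ℤ) < u - l →
      {ω : Fin (B + D + 1) → ℤ | IsBridge i j B D ω ∧
          ∃ s t : Fin (B + D + 1), s < t ∧ ω s = l ∧ ω t = u} = ∅) := by
  constructor
  · -- first part
    intro hB
    have hset : {ω : Fin (B + D + 1) → ℤ | IsBridge i j B D ω ∧
          ∃ s t : Fin (B + D + 1), s < t ∧ ω s = l ∧ ω t = u}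
        = {ω : Fin (B + D + 1) → ℤ | (ω 0 = i ∧ ω (Fin.last (B + D)) = j ∧ Steps ω) ∧
          ∃ s t : Fin (B + D + 1), s < t ∧ ω s = l ∧ ω t = u} := by
      ext ω
      simp only [Set.mem_setOf_eq]
      rw [bridge_char i j B D hj ω]
    rw [hset, ← Nat.card_coe_set_eq]
    obtain ⟨b, hbdef⟩ : ∃ b : ℤ, b = 2*l - u := ⟨_, rfl⟩
    obtain ⟨e2, he2def⟩ : ∃ e2 : ℤ, e2 = j - 2*(u - l) := ⟨_, rfl⟩
    have fwd : ∀ ω : Fin (B + D + 1) → ℤ,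
        ((ω 0 = i ∧ ω (Fin.last (B + D)) = j ∧ Steps ω) ∧
          ∃ s t : Fin (B + D + 1), s < t ∧ ω s = l ∧ ω t = u) →
        (Refl b (Refl l ω) 0 = i ∧ Refl b (Refl l ω) (Fin.last (B + D)) = e2 ∧
          Steps (Refl b (Refl l ω))) := by
      rintro ω ⟨⟨h0, hlast, hsteps⟩, s, t, hst, hsl, htu⟩
      have h1 : ∃ k, ω k = l := ⟨s, hsl⟩
      have hω1t : Refl l ω t = b := by
        rw [refl_ge h1 (le_trans (hitTime_min hsl) hst.le), htu]
        omega
      have h2 : ∃ k, Refl l ω k = b := ⟨t, hω1t⟩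
      refine ⟨?_, ?_, refl_steps h2 (refl_steps h1 hsteps)⟩
      · rw [refl_zero, refl_zero, h0]
      · rw [refl_ge h2 (Fin.le_last _), refl_ge h1 (Fin.le_last _), hlast]
        omega
    have bwd : ∀ ω : Fin (B + D + 1) → ℤ,
        (ω 0 = i ∧ ω (Fin.last (B + D)) = e2 ∧ Steps ω) →
        ((Refl l (Refl b ω) 0 = i ∧ Refl l (Refl b ω) (Fin.last (B + D)) = j ∧
          Steps (Refl l (Refl b ω))) ∧
          ∃ s t : Fin (B + D + 1), s < t ∧ Refl l (Refl b ω) s = l ∧ Refl l (Refl b ω) t = u) := by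
      rintro ω ⟨h0, hlast, hsteps⟩
      have hbi : b < ω 0 := by rw [h0]; omega
      have hbe : ω (Fin.last (B + D)) < b := by rw [hlast]; omega
      obtain ⟨t0, -, -, ht0⟩ := ivt hsteps b 0 (Fin.last (B + D)) (Fin.zero_le _) hbi hbe
      have h2 : ∃ k, ω k = b := ⟨t0, ht0⟩
      have hsteps1 : Steps (Refl b ω) := refl_steps h2 hsteps
      have ht1 : Refl b ω (hitTime b ω) = b := by
        rw [refl_le le_rfl]
        exact hitTime_spec h2
      have h01 : Refl b ω 0 = i := by rw [refl_zero, h0]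
      have hlast1 : Refl b ω (Fin.last (B + D)) = 2*b - e2 := by
        rw [refl_ge h2 (Fin.le_last _), hlast]
      have hl0 : l < Refl b ω 0 := by rw [h01]; omega
      have hlt1 : Refl b ω (hitTime b ω) < l := by rw [ht1]; omega
      obtain ⟨s1, -, hs1le, hs1⟩ := ivt hsteps1 l 0 (hitTime b ω) (Fin.zero_le _) hl0 hlt1
      have h1 : ∃ k, Refl b ω k = l := ⟨s1, hs1⟩
      have hs1lt : s1 < hitTime b ω :=
        lt_of_le_of_ne hs1le (fun hEq => by rw [hEq, ht1] at hs1; omega)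
      have hhs : hitTime l (Refl b ω) < hitTime b ω :=
        lt_of_le_of_lt (hitTime_min hs1) hs1lt
      refine ⟨⟨?_, ?_, refl_steps h1 hsteps1⟩, hitTime l (Refl b ω), hitTime b ω, hhs, ?_, ?_⟩
      · rw [refl_zero, h01]
      · rw [refl_ge h1 (Fin.le_last _), hlast1]
        omega
      · rw [refl_le le_rfl]
        exact hitTime_spec h1
      · rw [refl_ge h1 hhs.le, ht1]
        omega
    have hcongr : Nat.card {ω : Fin (B + D + 1) → ℤ |
          (ω 0 = i ∧ ω (Fin.last (B + D)) = j ∧ Steps ω) ∧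
          ∃ s t : Fin (B + D + 1), s < t ∧ ω s = l ∧ ω t = u}
        = Nat.card {ω : Fin (B + D + 1) → ℤ |
            ω 0 = i ∧ ω (Fin.last (B + D)) = e2 ∧ Steps ω} := by
      apply Nat.card_congr
      refine ⟨fun x => ⟨Refl b (Refl l x.1), fwd x.1 x.2⟩,
        fun x => ⟨Refl l (Refl b x.1), bwd x.1 x.2⟩, ?_, ?_⟩
      · rintro ⟨ω, hω⟩
        exact Subtype.ext (show Refl l (Refl b (Refl b (Refl l ω))) = ω by
          rw [refl_refl, refl_refl])
      · rintro ⟨ω, hω⟩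
        exact Subtype.ext (show Refl b (Refl l (Refl l (Refl b ω))) = ω by
          rw [refl_refl, refl_refl])
    rw [hcongr]
    have hmN : B - (u - l).toNat ≤ B + D := by clear hset fwd bwd hcongr; omega
    have he : e2 = i + 2 * ((B - (u - l).toNat : ℕ) : ℤ) - ((B + D : ℕ) : ℤ) := by
      clear hset fwd bwd hcongr hmN; omega
    exact count_paths i e2 (B - (u - l).toNat) hmN he
  · -- second part
    intro hB
    ext ω
    simp only [Set.mem_setOf_eq, Set.mem_empty_iff_false, iff_false, not_and]
    rintro hb ⟨s, t, hst, hsl, htu⟩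
    obtain ⟨h0, hl, hs, hcB⟩ := hb
    have hsS : Steps ω := hs
    have hstv : s.val < t.val := hst
    have h2 := two_mul_upcount ω hsS s.val t.val (le_of_lt hstv) (by omega)
    rw [pad_fin, pad_fin, hsl, htu] at h2
    set c := ((Finset.Ico s.val t.val).filter fun n => pad ω (n+1) = pad ω n + 1).card with hc
    have hle1 : c ≤ t.val - s.val := by
      calc c ≤ (Finset.Ico s.val t.val).card := Finset.card_filter_le _ _
        _ = t.val - s.val := Nat.card_Ico _ _
    have hle2 : c ≤ B := by
      have hsub : (Finset.Ico s.val t.val).filter (fun n => pad ω (n+1) = pad ω n + 1)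
          ⊆ (Finset.Ico 0 (B+D)).filter (fun n => pad ω (n+1) = pad ω n + 1) :=
        Finset.filter_subset_filter _ (Finset.Ico_subset_Ico (Nat.zero_le _) (by omega))
      have hcard := Finset.card_le_card hsub
      have h3 := card_up_eq (N := B + D) ω
      have : (upSet ω).card = B := hcB
      omega
    obtain ⟨sv, hsv⟩ : ∃ sv, s.val = sv := ⟨s.val, rfl⟩
    obtain ⟨tv, htv⟩ : ∃ tv, t.val = tv := ⟨t.val, rfl⟩
    rw [hsv, htv] at h2 hle1 hstv
    omega
end

section
/- (Double reflection, u before l.) Suppose l < i < u and l < j < u. Then the number of integer grid bridges from i to j with B upward jumps that attain the value u at some index s and attain the value l at some later index t > s equals C(K, B_{ul}), where B_{ul} = B + (u − l) (this binomial coefficient is 0 when B + (u − l) > K, in which case no such bridge exists). -/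
namespace DRaux
variable {K : ℕ}

def upSet (ω : Fin (K+1) → ℤ) : Finset (Fin K) :=
  Finset.univ.filter fun k => ω k.succ = ω k.castSucc + 1

def Steps (ω : Fin (K+1) → ℤ) : Prop := ∀ k : Fin K, |ω k.succ - ω k.castSucc| = 1

def IsWalk (i : ℤ) (m : ℕ) (ω : Fin (K+1) → ℤ) : Prop :=
  ω 0 = i ∧ Steps ω ∧ (upSet ω).card = m

lemma card_filter_succ (S : Finset (Fin K)) (n : ℕ) (hn : n < K) :
    (S.filter fun x : Fin K => (x : ℕ) < n + 1).card
      = (S.filter fun x : Fin K => (x : ℕ) < n).card + if (⟨n, hn⟩ : Fin K) ∈ S then 1 else 0 := by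
  have hU : (S.filter fun x : Fin K => (x : ℕ) < n + 1)
      = (S.filter fun x : Fin K => (x : ℕ) < n) ∪ (S.filter fun x => x = ⟨n, hn⟩) := by
    ext x
    simp only [Finset.mem_filter, Finset.mem_union]
    constructor
    · rintro ⟨hx, hlt⟩
      rcases Nat.lt_or_ge (x : ℕ) n with h | h
      · exact Or.inl ⟨hx, h⟩
      · exact Or.inr ⟨hx, Fin.ext (show (x : ℕ) = n by omega)⟩
    · rintro (⟨hx, h⟩ | ⟨hx, h⟩)
      · exact ⟨hx, by omega⟩
      · refine ⟨hx, ?_⟩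
        have : (x : ℕ) = n := by rw [h]
        omega
  have hdisj : Disjoint (S.filter fun x : Fin K => (x : ℕ) < n) (S.filter fun x => x = ⟨n, hn⟩) := by
    rw [Finset.disjoint_left]
    rintro x hx hx'
    simp only [Finset.mem_filter] at hx hx'
    obtain ⟨-, rfl⟩ := hx'
    have := hx.2
    simp at this
  rw [hU, Finset.card_union_of_disjoint hdisj, Finset.filter_eq']
  split <;> simp

lemma step_pm {ω : Fin (K+1) → ℤ} (hstep : Steps ω) (k : Fin K) :
    (k ∈ upSet ω ∧ ω k.succ = ω k.castSucc + 1) ∨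
      (k ∉ upSet ω ∧ ω k.succ = ω k.castSucc - 1) := by
  have h := hstep k
  rcases (abs_eq (by norm_num : (0:ℤ) ≤ 1)).mp h with h1 | h1
  · exact Or.inl ⟨by simp [upSet]; omega, by omega⟩
  · exact Or.inr ⟨by simp [upSet]; omega, by omega⟩

lemma walk_apply_nat {ω : Fin (K+1) → ℤ} (hstep : Steps ω) :
    ∀ n (hn : n ≤ K), ω ⟨n, by omega⟩
      = ω 0 + 2 * (((upSet ω).filter fun k : Fin K => (k : ℕ) < n).card : ℤ) - n := by
  intro n
  induction n with
  | zero =>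
    intro hn
    have : ((upSet ω).filter fun k : Fin K => (k : ℕ) < 0) = ∅ := by
      apply Finset.filter_false_of_mem; intro x _; omega
    simp [this]
  | succ n ih =>
    intro hn
    have hnK : n < K := by omega
    have hrec := ih (by omega)
    have hcard := card_filter_succ (upSet ω) n hnK
    have h1 : (⟨n + 1, by omega⟩ : Fin (K+1)) = (⟨n, hnK⟩ : Fin K).succ := rfl
    have h2 : ((⟨n, hnK⟩ : Fin K).castSucc) = (⟨n, by omega⟩ : Fin (K+1)) := rfl
    rcases step_pm hstep ⟨n, hnK⟩ with ⟨hmem, hstep'⟩ | ⟨hmem, hstep'⟩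
    · rw [if_pos hmem] at hcard
      rw [h1, hstep', h2, hrec, hcard]
      push_cast
      ring
    · rw [if_neg hmem] at hcard
      rw [h1, hstep', h2, hrec, hcard]
      push_cast
      ring

lemma walk_apply {ω : Fin (K+1) → ℤ} (hstep : Steps ω) (a : Fin (K+1)) :
    ω a = ω 0 + 2 * (((upSet ω).filter fun k : Fin K => (k : ℕ) < (a : ℕ)).card : ℤ) - (a : ℕ) := by
  have := walk_apply_nat hstep (a : ℕ) (by omega)
  simpa using this

lemma walk_last {ω : Fin (K+1) → ℤ} (hstep : Steps ω) :
    ω (Fin.last K) = ω 0 + 2 * ((upSet ω).card : ℤ) - K := by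
  have h := walk_apply hstep (Fin.last K)
  have hf : ((upSet ω).filter fun k : Fin K => (k : ℕ) < ((Fin.last K : Fin (K+1)) : ℕ)) = upSet ω := by
    apply Finset.filter_true_of_mem
    intro x _
    simpa using x.isLt
  rw [hf] at h
  simpa using h

lemma ivt {ω : Fin (K+1) → ℤ} (hstep : Steps ω) {a b : Fin (K+1)} (hab : a ≤ b) {c : ℤ}
    (h1 : ω a ≤ c) (h2 : c ≤ ω b) : ∃ k, a ≤ k ∧ k ≤ b ∧ ω k = c := by
  classical
  set S : Finset (Fin (K+1)) := Finset.univ.filter fun k => a ≤ k ∧ k ≤ b ∧ c ≤ ω k with hS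
  have hSne : S.Nonempty := ⟨b, by simp [hS, hab, h2]⟩
  set m := S.min' hSne with hm
  have hmS : m ∈ S := S.min'_mem hSne
  simp only [hS, Finset.mem_filter] at hmS
  obtain ⟨-, ham, hmb, hcm⟩ := hmS
  rcases eq_or_lt_of_le hcm with heq | hlt
  · exact ⟨m, ham, hmb, heq.symm⟩
  · exfalso
    have hane : a ≠ m := by
      intro h
      rw [h] at h1
      omega
    have ham' : a < m := lt_of_le_of_ne ham hane
    have hm1 : 1 ≤ (m : ℕ) := by
      have := Fin.lt_def.mp ham'; omega
    have hmK : (m : ℕ) - 1 < K := by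
      have := hmb.trans (Fin.le_last b); have := Fin.le_def.mp this; simp at this; omega
    obtain ⟨p, hpval⟩ : ∃ p : Fin K, (p : ℕ) = (m : ℕ) - 1 := ⟨⟨(m : ℕ) - 1, hmK⟩, rfl⟩
    have hsucc : p.succ = m := by
      apply Fin.ext; simp only [Fin.val_succ, hpval]; omega
    have hpcm : p.castSucc < m := by
      rw [Fin.lt_def]; simp only [Fin.coe_castSucc, hpval]; omega
    have hpc_notS : p.castSucc ∉ S := fun h => absurd (S.min'_le _ h) (by rw [← hm]; exact not_le.mpr hpcm)
    have hapc : a ≤ p.castSucc := by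
      rw [Fin.le_def]; have := Fin.lt_def.mp ham'; simp only [Fin.coe_castSucc, hpval]; omega
    have hpcb : p.castSucc ≤ b := le_trans (le_of_lt hpcm) hmb
    have : ¬ c ≤ ω p.castSucc := by
      intro hc
      exact hpc_notS (by simp [hS, hapc, hpcb, hc])
    have hstep' := hstep p
    rw [hsucc] at hstep'
    have := abs_le.mp (le_of_eq hstep')
    omega

def ofSet (i : ℤ) (S : Finset (Fin K)) : Fin (K+1) → ℤ :=
  fun a => i + 2 * ((S.filter fun k : Fin K => (k : ℕ) < (a : ℕ)).card : ℤ) - (a : ℕ)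

lemma ofSet_zero (i : ℤ) (S : Finset (Fin K)) : ofSet i S 0 = i := by
  have : (S.filter fun k : Fin K => (k : ℕ) < ((0 : Fin (K+1)) : ℕ)) = ∅ := by
    apply Finset.filter_false_of_mem; intro x _; simp
  simp [ofSet, this]

lemma ofSet_step (i : ℤ) (S : Finset (Fin K)) (k : Fin K) :
    ofSet i S k.succ - ofSet i S k.castSucc = if k ∈ S then 1 else -1 := by
  have hc := card_filter_succ S (k : ℕ) k.isLt
  have h1 : (k.succ : ℕ) = (k : ℕ) + 1 := rfl
  have h2 : ((k.castSucc : Fin (K+1)) : ℕ) = (k : ℕ) := rfl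
  have hk : (⟨(k : ℕ), k.isLt⟩ : Fin K) = k := by apply Fin.ext; rfl
  rw [hk] at hc
  simp only [ofSet, h1, h2, hc]
  split <;> push_cast <;> ring

lemma ofSet_steps (i : ℤ) (S : Finset (Fin K)) : Steps (ofSet i S) := by
  intro k
  rw [ofSet_step]
  split <;> norm_num

lemma upSet_ofSet (i : ℤ) (S : Finset (Fin K)) : upSet (ofSet i S) = S := by
  ext k
  have h := ofSet_step i S k
  simp only [upSet, Finset.mem_filter, Finset.mem_univ, true_and]
  constructor
  · intro hk
    by_contra hkS
    rw [if_neg hkS] at h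
    omega
  · intro hk
    rw [if_pos hk] at h
    omega

lemma ofSet_walk (i : ℤ) (S : Finset (Fin K)) : IsWalk i S.card (ofSet i S) :=
  ⟨ofSet_zero i S, ofSet_steps i S, by rw [upSet_ofSet]⟩

lemma walk_eq_ofSet {i : ℤ} {m : ℕ} {ω : Fin (K+1) → ℤ} (h : IsWalk i m ω) :
    ω = ofSet i (upSet ω) := by
  funext a
  rw [walk_apply h.2.1 a, h.1]
  rfl

lemma ncard_walk (i : ℤ) (m : ℕ) : {ω : Fin (K+1) → ℤ | IsWalk i m ω}.ncard = K.choose m := by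
  classical
  have himg : {ω : Fin (K+1) → ℤ | IsWalk i m ω}
      = ofSet i '' {S : Finset (Fin K) | S.card = m} := by
    ext ω
    constructor
    · intro h
      exact ⟨upSet ω, h.2.2, (walk_eq_ofSet h).symm⟩
    · rintro ⟨S, hS, rfl⟩
      exact hS ▸ ofSet_walk i S
  rw [himg, Set.ncard_image_of_injOn]
  · have hset : {S : Finset (Fin K) | S.card = m}
        = ↑(Finset.powersetCard m (Finset.univ : Finset (Fin K))) := by
      ext S
      simp [Finset.mem_powersetCard, Finset.subset_univ]
    rw [hset, Set.ncard_coe_finset, Finset.card_powersetCard, Finset.card_univ, Fintype.card_fin]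
  · intro S hS T hT hST
    have := congrArg upSet hST
    rwa [upSet_ofSet, upSet_ofSet] at this

noncomputable def firstIdx (S : Finset (Fin (K+1))) : Fin (K+1) :=
  if h : S.Nonempty then S.min' h else 0

noncomputable def s0 (c₁ : ℤ) (ω : Fin (K+1) → ℤ) : Fin (K+1) :=
  firstIdx (Finset.univ.filter fun k => ω k = c₁)

noncomputable def t0 (c₁ c₂ : ℤ) (ω : Fin (K+1) → ℤ) : Fin (K+1) :=
  firstIdx (Finset.univ.filter fun k => ω k = c₂ ∧ s0 c₁ ω < k)

noncomputable def Tr (c₁ c₂ : ℤ) (ω : Fin (K+1) → ℤ) : Fin (K+1) → ℤ :=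
  fun k => if k ≤ s0 c₁ ω then ω k else
    if k ≤ t0 c₁ c₂ ω then 2*c₁ - ω k else ω k + 2*(c₁ - c₂)

variable {c₁ c₂ : ℤ} {ω : Fin (K+1) → ℤ}

def Hex (c₁ c₂ : ℤ) (ω : Fin (K+1) → ℤ) : Prop :=
  ∃ s t : Fin (K+1), s < t ∧ ω s = c₁ ∧ ω t = c₂

lemma s0_ne (hex : Hex c₁ c₂ ω) : (Finset.univ.filter fun k => ω k = c₁).Nonempty := by
  obtain ⟨s, t, hst, hs, ht⟩ := hex
  exact ⟨s, by simp [hs]⟩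

lemma s0_hit (hex : Hex c₁ c₂ ω) : ω (s0 c₁ ω) = c₁ := by
  have hne := s0_ne hex
  unfold s0 firstIdx
  rw [dif_pos hne]
  have := Finset.min'_mem _ hne
  simpa using this

lemma s0_min (hex : Hex c₁ c₂ ω) {k : Fin (K+1)} (hk : ω k = c₁) : s0 c₁ ω ≤ k := by
  have hne := s0_ne hex
  unfold s0 firstIdx
  rw [dif_pos hne]
  exact Finset.min'_le _ _ (by simp [hk])

lemma t0_ne (hex : Hex c₁ c₂ ω) :
    (Finset.univ.filter fun k => ω k = c₂ ∧ s0 c₁ ω < k).Nonempty := by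
  obtain ⟨s, t, hst, hs, ht⟩ := id hex
  exact ⟨t, by simp [ht, lt_of_le_of_lt (s0_min hex hs) hst]⟩

lemma t0_hit (hex : Hex c₁ c₂ ω) : ω (t0 c₁ c₂ ω) = c₂ := by
  have hne := t0_ne hex
  unfold t0 firstIdx
  rw [dif_pos hne]
  have := Finset.min'_mem _ hne
  rw [Finset.mem_filter] at this
  exact this.2.1

lemma t0_gt (hex : Hex c₁ c₂ ω) : s0 c₁ ω < t0 c₁ c₂ ω := by
  have hne := t0_ne hex
  unfold t0 firstIdx
  rw [dif_pos hne]
  have := Finset.min'_mem _ hne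
  rw [Finset.mem_filter] at this
  exact this.2.2

lemma t0_min (hex : Hex c₁ c₂ ω) {k : Fin (K+1)} (hk : ω k = c₂) (hk2 : s0 c₁ ω < k) :
    t0 c₁ c₂ ω ≤ k := by
  have hne := t0_ne hex
  unfold t0 firstIdx
  rw [dif_pos hne]
  exact Finset.min'_le _ _ (by simp [hk, hk2])

lemma Tr_apply_le {k : Fin (K+1)} (h : k ≤ s0 c₁ ω) : Tr c₁ c₂ ω k = ω k := if_pos h

lemma Tr_apply_mid (hex : Hex c₁ c₂ ω) {k : Fin (K+1)} (h1 : s0 c₁ ω ≤ k)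
    (h2 : k ≤ t0 c₁ c₂ ω) : Tr c₁ c₂ ω k = 2*c₁ - ω k := by
  rcases eq_or_lt_of_le h1 with heq | hlt
  · unfold Tr
    rw [if_pos (le_of_eq heq.symm), ← heq, s0_hit hex]
    ring
  · unfold Tr
    rw [if_neg (not_le.mpr hlt), if_pos h2]

lemma Tr_apply_ge (hex : Hex c₁ c₂ ω) {k : Fin (K+1)} (h : t0 c₁ c₂ ω ≤ k) :
    Tr c₁ c₂ ω k = ω k + 2*(c₁ - c₂) := by
  have hst := t0_gt hex
  rcases eq_or_lt_of_le h with heq | hlt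
  · unfold Tr
    rw [if_neg (not_le.mpr (heq ▸ hst)), if_pos (le_of_eq heq.symm), ← heq, t0_hit hex]
    ring
  · unfold Tr
    rw [if_neg (not_le.mpr (lt_trans hst hlt)), if_neg (not_le.mpr hlt)]

lemma Tr_steps (hstep : Steps ω) (hex : Hex c₁ c₂ ω) : Steps (Tr c₁ c₂ ω) := by
  intro k
  have hcs : k.castSucc ≤ k.succ := by
    rw [Fin.le_def]; simp
  by_cases h1 : k.succ ≤ s0 c₁ ω
  · rw [Tr_apply_le (le_trans hcs h1), Tr_apply_le h1]
    exact hstep k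
  · have hs1 : s0 c₁ ω ≤ k.castSucc := by
      rw [Fin.le_def]
      have := Fin.lt_def.mp (not_le.mp h1)
      simp only [Fin.val_succ] at this
      simp only [Fin.coe_castSucc]
      omega
    by_cases h2 : k.succ ≤ t0 c₁ c₂ ω
    · rw [Tr_apply_mid hex (le_trans hs1 hcs) h2, Tr_apply_mid hex hs1 (le_trans hcs h2)]
      have heq : (2*c₁ - ω k.succ) - (2*c₁ - ω k.castSucc) = -(ω k.succ - ω k.castSucc) := by
        ring
      rw [heq, abs_neg]
      exact hstep k
    · have ht1 : t0 c₁ c₂ ω ≤ k.castSucc := by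
        rw [Fin.le_def]
        have := Fin.lt_def.mp (not_le.mp h2)
        simp only [Fin.val_succ] at this
        simp only [Fin.coe_castSucc]
        omega
      rw [Tr_apply_ge hex (le_trans ht1 hcs), Tr_apply_ge hex ht1]
      have heq : (ω k.succ + 2*(c₁ - c₂)) - (ω k.castSucc + 2*(c₁ - c₂))
          = ω k.succ - ω k.castSucc := by ring
      rw [heq]
      exact hstep k

lemma Tr_zero : Tr c₁ c₂ ω 0 = ω 0 := Tr_apply_le (Fin.zero_le _)

lemma Tr_last (hex : Hex c₁ c₂ ω) :
    Tr c₁ c₂ ω (Fin.last K) = ω (Fin.last K) + 2*(c₁ - c₂) :=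
  Tr_apply_ge hex (Fin.le_last _)

lemma Tr_card (hstep : Steps ω) (hex : Hex c₁ c₂ ω) :
    ((upSet (Tr c₁ c₂ ω)).card : ℤ) = (upSet ω).card + (c₁ - c₂) := by
  have h1 := walk_last hstep
  have h2 := walk_last (Tr_steps hstep hex)
  rw [Tr_zero, Tr_last hex, h1] at h2
  linarith

lemma Tr_hits (hex : Hex c₁ c₂ ω) : Hex c₁ (2*c₁ - c₂) (Tr c₁ c₂ ω) := by
  refine ⟨s0 c₁ ω, t0 c₁ c₂ ω, t0_gt hex, ?_, ?_⟩
  · rw [Tr_apply_le (le_refl _), s0_hit hex]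
  · rw [Tr_apply_mid hex (le_of_lt (t0_gt hex)) (le_refl _), t0_hit hex]

lemma s0_Tr (hex : Hex c₁ c₂ ω) : s0 c₁ (Tr c₁ c₂ ω) = s0 c₁ ω := by
  have hexT := Tr_hits hex
  have hTs0 : Tr c₁ c₂ ω (s0 c₁ ω) = c₁ := by
    rw [Tr_apply_le (le_refl _), s0_hit hex]
  apply le_antisymm (s0_min hexT hTs0)
  by_contra hcon
  push_neg at hcon
  have hh := s0_hit hexT
  rw [Tr_apply_le (le_of_lt hcon)] at hh
  exact absurd (s0_min hex hh) (not_le.mpr hcon)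

lemma t0_Tr (hex : Hex c₁ c₂ ω) : t0 c₁ (2*c₁ - c₂) (Tr c₁ c₂ ω) = t0 c₁ c₂ ω := by
  have hexT := Tr_hits hex
  have hTt0 : Tr c₁ c₂ ω (t0 c₁ c₂ ω) = 2*c₁ - c₂ := by
    rw [Tr_apply_mid hex (le_of_lt (t0_gt hex)) (le_refl _), t0_hit hex]
  apply le_antisymm
  · exact t0_min hexT hTt0 (by rw [s0_Tr hex]; exact t0_gt hex)
  · by_contra hcon
    push_neg at hcon
    have h1 := t0_hit hexT
    have h2 := t0_gt hexT
    rw [s0_Tr hex] at h2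
    rw [Tr_apply_mid hex (le_of_lt h2) (le_of_lt hcon)] at h1
    have h3 : ω (t0 c₁ (2*c₁ - c₂) (Tr c₁ c₂ ω)) = c₂ := by linarith
    exact absurd (t0_min hex h3 h2) (not_le.mpr hcon)

lemma Tr_inv (hex : Hex c₁ c₂ ω) : Tr c₁ (2*c₁ - c₂) (Tr c₁ c₂ ω) = ω := by
  have hexT := Tr_hits hex
  funext k
  rcases le_total k (s0 c₁ ω) with h | h
  · rw [Tr_apply_le (show k ≤ s0 c₁ (Tr c₁ c₂ ω) by rw [s0_Tr hex]; exact h),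
      Tr_apply_le h]
  · rcases le_total k (t0 c₁ c₂ ω) with h2 | h2
    · rw [Tr_apply_mid hexT (show s0 c₁ (Tr c₁ c₂ ω) ≤ k by rw [s0_Tr hex]; exact h)
        (show k ≤ t0 c₁ (2*c₁ - c₂) (Tr c₁ c₂ ω) by rw [t0_Tr hex]; exact h2),
        Tr_apply_mid hex h h2]
      ring
    · rw [Tr_apply_ge hexT (show t0 c₁ (2*c₁ - c₂) (Tr c₁ c₂ ω) ≤ k by
          rw [t0_Tr hex]; exact h2), Tr_apply_ge hex h2]
      ring

end DRaux

open DRaux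

/-- Double reflection, `u` before `l`: with `l < i < u` and `l < j < u`, the number
of integer grid bridges from `i` to `j` with `B` upward jumps attaining `u` at some
index and `l` at some strictly later index equals `C(K, B_{ul})` with
`B_{ul} = B + (u - l)` (zero when `B + (u - l) > K`). -/
theorem double_reflection_ul (i j l u : ℤ) (B D : ℕ) (hj : j = i + B - D)
    (hli : l < i) (hiu : i < u) (hlj : l < j) (hju : j < u) :
    Set.ncard {ω : Fin (B + D + 1) → ℤ | IsBridge i j B D ω ∧
        ∃ s t : Fin (B + D + 1), s < t ∧ ω s = u ∧ ω t = l}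
      = Nat.choose (B + D) (B + (u - l).toNat) := by
  classical
  set d := (u - l).toNat with hd'
  have hd : (u - l : ℤ) = d := (Int.toNat_of_nonneg (by omega)).symm
  have hbw : ∀ ω : Fin (B + D + 1) → ℤ, IsBridge i j B D ω ↔ IsWalk i B ω := by
    intro ω
    constructor
    · rintro ⟨h0, hlast, hstep, hcard⟩
      exact ⟨h0, hstep, hcard⟩
    · rintro ⟨h0, hstep, hcard⟩
      refine ⟨h0, ?_, hstep, hcard⟩
      have hwl := walk_last hstep
      rw [h0, hcard] at hwl
      rw [hwl, hj]
      push_cast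
      ring
  have key : {ω : Fin (B + D + 1) → ℤ | IsBridge i j B D ω ∧
        ∃ s t : Fin (B + D + 1), s < t ∧ ω s = u ∧ ω t = l}
      = {ω : Fin (B + D + 1) → ℤ | IsWalk i B ω ∧ Hex u l ω} := by
    ext ω
    simp only [Set.mem_setOf_eq, hbw, Hex]
  rw [key]
  have hexeta : ∀ η : Fin (B + D + 1) → ℤ, IsWalk i (B + d) η → Hex u (2*u - l) η := by
    intro η hη
    have hlast := walk_last hη.2.1
    rw [hη.1, hη.2.2] at hlast
    have hlast2 : η (Fin.last (B + D)) = i + 2*(B + d : ℕ) - (B + D : ℕ) := by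
      rw [hlast]
    have hul : u ≤ η (Fin.last (B + D)) := by
      rw [hlast2]; push_cast; omega
    obtain ⟨s, hs0, hslast, hsu⟩ := ivt hη.2.1 (Fin.zero_le (Fin.last (B + D)))
      (by rw [hη.1]; exact le_of_lt hiu) hul
    obtain ⟨t, hts, htlast, htv⟩ := ivt hη.2.1 (Fin.le_last s)
      (show η s ≤ 2*u - l by rw [hsu]; omega)
      (show 2*u - l ≤ η (Fin.last (B + D)) by rw [hlast2]; push_cast; omega)
    refine ⟨s, t, lt_of_le_of_ne hts ?_, hsu, htv⟩
    intro h
    rw [← h, hsu] at htv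
    omega
  have hBij : Set.BijOn (Tr u l) {ω : Fin (B + D + 1) → ℤ | IsWalk i B ω ∧ Hex u l ω}
      {ω : Fin (B + D + 1) → ℤ | IsWalk i (B + d) ω} := by
    apply Set.InvOn.bijOn (f' := Tr u (2*u - l))
    · constructor
      · intro ω hω
        exact Tr_inv hω.2
      · intro η hη
        have hexη := hexeta η hη
        have h := Tr_inv hexη
        have e : 2*u - (2*u - l) = l := by ring
        rwa [e] at h
    · rintro ω ⟨hw, hex⟩
      refine ⟨by rw [Tr_zero, hw.1], Tr_steps hw.2.1 hex, ?_⟩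
      have hc := Tr_card hw.2.1 hex
      rw [hw.2.2] at hc
      have hc2 : ((upSet (Tr u l ω)).card : ℤ) = ((B + d : ℕ) : ℤ) := by
        rw [hc]; push_cast; omega
      exact_mod_cast hc2
    · intro η hη
      have hexη := hexeta η hη
      refine ⟨⟨by rw [Tr_zero, hη.1], Tr_steps hη.2.1 hexη, ?_⟩, ?_⟩
      · have hc := Tr_card hη.2.1 hexη
        rw [hη.2.2] at hc
        have hc2 : ((upSet (Tr u (2*u - l) η)).card : ℤ) = ((B : ℕ) : ℤ) := by
          rw [hc]; push_cast; omega
        exact_mod_cast hc2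
      · have h := Tr_hits hexη
        have e : 2*u - (2*u - l) = l := by ring
        rwa [e] at h
  calc {ω : Fin (B + D + 1) → ℤ | IsWalk i B ω ∧ Hex u l ω}.ncard
      = (Tr u l '' {ω : Fin (B + D + 1) → ℤ | IsWalk i B ω ∧ Hex u l ω}).ncard :=
        (Set.ncard_image_of_injOn hBij.injOn).symm
    _ = {ω : Fin (B + D + 1) → ℤ | IsWalk i (B + d) ω}.ncard := by rw [hBij.image_eq]
    _ = Nat.choose (B + D) (B + d) := ncard_walk i (B + d)
end
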